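/- There does not exist a (4,4)-net in ℂℙ². -/

import Mathlib

set_option synthInstance.maxSize 4000
set_option synthInstance.maxHeartbeats 4000000
set_option maxHeartbeats 4000000
set_option linter.unusedVariables false
set_option linter.unreachableTactic false
set_option linter.unnecessarySeqFocus false

open Module Submodule Matrix
open scoped Matrix

namespace NoNet44X

abbrev V3 := Fin 3 → ℂ

lemma exists_spanning {X : Submodule ℂ V3} (hX : finrank ℂ X = 1) :
    ∃ u : V3, u ≠ 0 ∧ X = ℂ ∙ u := by
  have hb : X ≠ ⊥ := by
    intro h
    rw [h, finrank_bot] at hX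
    exact absurd hX (by norm_num)
  obtain ⟨u, hu, hu0⟩ := Submodule.exists_mem_ne_zero_of_ne_bot hb
  refine ⟨u, hu0, ?_⟩
  have h1 : (ℂ ∙ u) ≤ X := (span_singleton_le_iff_mem u X).2 hu
  exact (eq_of_le_of_finrank_le h1 (by rw [finrank_span_singleton hu0, hX])).symm

lemma parallel {a b : V3} (ha : a ≠ 0) (h : a ⨯₃ b = 0) : b ∈ (ℂ ∙ a) := by
  have h0 := congr_fun h 0
  have h1 := congr_fun h 1
  have h2 := congr_fun h 2
  simp [cross_apply] at h0 h1 h2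
  rw [Submodule.mem_span_singleton]
  have ha' : a 0 ≠ 0 ∨ a 1 ≠ 0 ∨ a 2 ≠ 0 := by
    by_contra hc
    push_neg at hc
    exact ha (by funext i; fin_cases i <;> simp [hc.1, hc.2.1, hc.2.2])
  rcases ha' with h' | h' | h'
  · refine ⟨b 0 / a 0, funext fun i => ?_⟩
    fin_cases i
    · show b 0 / a 0 * a 0 = b 0; field_simp
    · show b 0 / a 0 * a 1 = b 1; field_simp; linear_combination -h2
    · show b 0 / a 0 * a 2 = b 2; field_simp; linear_combination h1
  · refine ⟨b 1 / a 1, funext fun i => ?_⟩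
    fin_cases i
    · show b 1 / a 1 * a 0 = b 0; field_simp; linear_combination h2
    · show b 1 / a 1 * a 1 = b 1; field_simp
    · show b 1 / a 1 * a 2 = b 2; field_simp; linear_combination -h0
  · refine ⟨b 2 / a 2, funext fun i => ?_⟩
    fin_cases i
    · show b 2 / a 2 * a 0 = b 0; field_simp; linear_combination -h1
    · show b 2 / a 2 * a 1 = b 1; field_simp; linear_combination h0
    · show b 2 / a 2 * a 2 = b 2; field_simp

lemma dot_cross_zero_of_mem {a b w : V3} (hw : w ∈ span ℂ ({a, b} : Set V3)) :
    w ⬝ᵥ (a ⨯₃ b) = 0 := by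
  obtain ⟨p, q, rfl⟩ := Submodule.mem_span_pair.1 hw
  simp [add_dotProduct, smul_dotProduct]

lemma cross_ne_zero_of_rank_two {a b : V3} {ℓ : Submodule ℂ V3}
    (hl : finrank ℂ ℓ = 2) (he : ℓ = span ℂ ({a, b} : Set V3)) : a ⨯₃ b ≠ 0 := by
  intro hc
  have hins : span ℂ ({a, b} : Set V3) = (ℂ ∙ a) ⊔ (ℂ ∙ b) := by
    rw [show ({a, b} : Set V3) = insert a {b} from rfl, Submodule.span_insert]
  by_cases ha : a = 0
  · rw [he, hins, ha] at hl
    have : finrank ℂ ↥((ℂ ∙ (0 : V3)) ⊔ (ℂ ∙ b)) ≤ 1 := by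
      rw [Submodule.span_zero_singleton, bot_sup_eq]
      by_cases hb : b = 0
      · rw [hb, Submodule.span_zero_singleton, finrank_bot]; omega
      · rw [finrank_span_singleton hb]
    omega
  · have hb : b ∈ ℂ ∙ a := parallel ha hc
    have : span ℂ ({a, b} : Set V3) ≤ ℂ ∙ a := by
      rw [hins]
      exact sup_le le_rfl ((span_singleton_le_iff_mem b _).2 hb)
    have h2 := Submodule.finrank_mono this
    rw [← he, hl, finrank_span_singleton ha] at h2
    omega

lemma cross_cross_eq (n1 n2 u : V3) :
    (n1 ⨯₃ n2) ⨯₃ u = (n1 ⬝ᵥ u) • n2 - (n2 ⬝ᵥ u) • n1 := by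
  funext i
  fin_cases i <;>
    simp [cross_apply, dotProduct, Fin.sum_univ_three] <;> ring

/-- dot-with-n as a linear functional -/
noncomputable def dotF (n : V3) : V3 →ₗ[ℂ] ℂ where
  toFun w := w ⬝ᵥ n
  map_add' x y := by simp [add_dotProduct]
  map_smul' c x := by simp [smul_dotProduct]

lemma point_of_two_lines {X ℓ₁ ℓ₂ : Submodule ℂ V3} {a b c d : V3}
    (hX : finrank ℂ X = 1) (h1 : finrank ℂ ℓ₁ = 2) (h2 : finrank ℂ ℓ₂ = 2) (hne : ℓ₁ ≠ ℓ₂)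
    (hXl1 : X ≤ ℓ₁) (hXl2 : X ≤ ℓ₂) (e1 : ℓ₁ = span ℂ ({a, b} : Set V3))
    (e2 : ℓ₂ = span ℂ ({c, d} : Set V3)) :
    X = ℂ ∙ ((a ⨯₃ b) ⨯₃ (c ⨯₃ d)) := by
  set n1 := a ⨯₃ b with hn1
  set n2 := c ⨯₃ d with hn2
  have hn1ne : n1 ≠ 0 := cross_ne_zero_of_rank_two h1 e1
  have hn2ne : n2 ≠ 0 := cross_ne_zero_of_rank_two h2 e2
  -- the normal cross is nonzero
  have hnn : n1 ⨯₃ n2 ≠ 0 := by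
    intro hc
    obtain ⟨k, hk⟩ := Submodule.mem_span_singleton.1 (parallel hn1ne hc)
    have hk0 : k ≠ 0 := by rintro rfl; simp at hk; exact hn2ne hk.symm
    have hker1 : ℓ₁ ≤ LinearMap.ker (dotF n1) := by
      intro w hw
      simp only [LinearMap.mem_ker, dotF, LinearMap.coe_mk, AddHom.coe_mk]
      exact dot_cross_zero_of_mem (e1 ▸ hw)
    have hker2 : ℓ₂ ≤ LinearMap.ker (dotF n1) := by
      intro w hw
      have h0 : w ⬝ᵥ n2 = 0 := dot_cross_zero_of_mem (e2 ▸ hw)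
      rw [← hk, dotProduct_smul] at h0
      simp only [LinearMap.mem_ker, dotF, LinearMap.coe_mk, AddHom.coe_mk]
      exact (smul_eq_zero.1 h0).resolve_left hk0
    have hkne : LinearMap.ker (dotF n1) ≠ ⊤ := by
      intro ht
      have ha' : n1 0 ≠ 0 ∨ n1 1 ≠ 0 ∨ n1 2 ≠ 0 := by
        by_contra hcc
        push_neg at hcc
        exact hn1ne (by funext i; fin_cases i <;> simp [hcc.1, hcc.2.1, hcc.2.2])
      have hmem : ∀ w : V3, w ⬝ᵥ n1 = 0 := fun w => by
        have : w ∈ LinearMap.ker (dotF n1) := ht ▸ Submodule.mem_top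
        simpa [dotF] using this
      rcases ha' with h' | h' | h'
      · exact h' (by simpa [dotProduct, Fin.sum_univ_three, Pi.single_apply] using hmem (Pi.single 0 1))
      · exact h' (by simpa [dotProduct, Fin.sum_univ_three, Pi.single_apply] using hmem (Pi.single 1 1))
      · exact h' (by simpa [dotProduct, Fin.sum_univ_three, Pi.single_apply] using hmem (Pi.single 2 1))
    have hkfr : finrank ℂ ↥(LinearMap.ker (dotF n1)) < 3 := by
      have := Submodule.finrank_lt (K := ℂ) (V := V3) hkne
      simpa [Module.finrank_fin_fun] using this
    have e1' : ℓ₁ = LinearMap.ker (dotF n1) :=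
      eq_of_le_of_finrank_le hker1 (by omega)
    have e2' : ℓ₂ = LinearMap.ker (dotF n1) :=
      eq_of_le_of_finrank_le hker2 (by omega)
    exact hne (e1'.trans e2'.symm)
  -- pick spanning vector of X
  obtain ⟨u, hu0, hXu⟩ := exists_spanning hX
  have hu1 : u ⬝ᵥ n1 = 0 := by
    have : u ∈ ℓ₁ := hXl1 (hXu ▸ Submodule.mem_span_singleton_self u)
    exact dot_cross_zero_of_mem (e1 ▸ this)
  have hu2 : u ⬝ᵥ n2 = 0 := by
    have : u ∈ ℓ₂ := hXl2 (hXu ▸ Submodule.mem_span_singleton_self u)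
    exact dot_cross_zero_of_mem (e2 ▸ this)
  have hcc : (n1 ⨯₃ n2) ⨯₃ u = 0 := by
    rw [cross_cross_eq]
    rw [dotProduct_comm u n1] at hu1
    rw [dotProduct_comm u n2] at hu2
    rw [hu1, hu2]
    simp
  have humem : u ∈ ℂ ∙ (n1 ⨯₃ n2) := parallel hnn hcc
  have hle : X ≤ ℂ ∙ (n1 ⨯₃ n2) := hXu ▸ (span_singleton_le_iff_mem _ _).2 humem
  exact eq_of_le_of_finrank_le hle (by rw [finrank_span_singleton hnn, hX])

lemma point_eq_span {X : Submodule ℂ V3} {u : V3} (hX : finrank ℂ X = 1)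
    (hu : u ∈ X) (hu0 : u ≠ 0) : X = ℂ ∙ u := by
  have h1 : (ℂ ∙ u) ≤ X := (span_singleton_le_iff_mem u X).2 hu
  exact (eq_of_le_of_finrank_le h1 (by rw [finrank_span_singleton hu0, hX])).symm

lemma line_eq_sup {X Y ℓ : Submodule ℂ V3} (hX : finrank ℂ X = 1) (hY : finrank ℂ Y = 1)
    (hXY : X ≠ Y) (hl : finrank ℂ ℓ = 2) (h1 : X ≤ ℓ) (h2 : Y ≤ ℓ) : ℓ = X ⊔ Y := by
  have hinf : finrank ℂ ↥(X ⊓ Y) = 0 := by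
    by_contra h
    have hle : finrank ℂ ↥(X ⊓ Y) ≤ 1 := hX ▸ Submodule.finrank_mono (inf_le_left (b := Y))
    have h1' : finrank ℂ ↥(X ⊓ Y) = 1 := by omega
    have : X ⊓ Y = X := eq_of_le_of_finrank_le inf_le_left (by rw [h1', hX])
    have hXY' : X = Y := eq_of_le_of_finrank_le (this ▸ inf_le_right) (by rw [hX, hY])
    exact hXY hXY'
  have hsup : finrank ℂ ↥(X ⊔ Y) = 2 := by
    have := Submodule.finrank_sup_add_finrank_inf_eq X Y
    omega
  exact (eq_of_le_of_finrank_le (sup_le h1 h2) (by rw [hsup, hl])).symm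

lemma line_eq_span_pair {X Y ℓ : Submodule ℂ V3} {u v : V3} (hX : finrank ℂ X = 1)
    (hY : finrank ℂ Y = 1) (hXY : X ≠ Y) (hl : finrank ℂ ℓ = 2) (h1 : X ≤ ℓ) (h2 : Y ≤ ℓ)
    (hu : X = ℂ ∙ u) (hv : Y = ℂ ∙ v) : ℓ = span ℂ {u, v} := by
  rw [line_eq_sup hX hY hXY hl h1 h2, hu, hv]
  rw [show ({u, v} : Set V3) = insert u {v} from rfl, Submodule.span_insert]

lemma det_eq_zero_of_mem {ℓ : Submodule ℂ V3} (hl : finrank ℂ ℓ = 2) {u v w : V3}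
    (hu : u ∈ ℓ) (hv : v ∈ ℓ) (hw : w ∈ ℓ) : Matrix.det ![u, v, w] = 0 := by
  by_contra h
  have hli : LinearIndependent ℂ (fun i => (![u, v, w] : Matrix (Fin 3) (Fin 3) ℂ) i) :=
    Matrix.linearIndependent_rows_iff_isUnit.2 ((Matrix.isUnit_iff_isUnit_det _).2
      (isUnit_iff_ne_zero.2 h))
  have hsp : span ℂ (Set.range ![u, v, w]) ≤ ℓ := by
    rw [Submodule.span_le]
    rintro x ⟨i, rfl⟩
    fin_cases i <;> simpa
  have h3 : finrank ℂ ↥(span ℂ (Set.range ![u, v, w])) = 3 := by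
    rw [finrank_span_eq_card hli, Fintype.card_fin]
  have := Submodule.finrank_mono hsp
  omega

/-- addition in GF(4) -/
def xor4 : Fin 4 → Fin 4 → Fin 4 := ![![0,1,2,3], ![1,0,3,2], ![2,3,0,1], ![3,2,1,0]]

/-- multiplication by ω in GF(4) -/
def mw : Fin 4 → Fin 4 := ![0, 2, 3, 1]

/-- multiplication by ω² in GF(4) -/
def mw2 : Fin 4 → Fin 4 := ![0, 3, 1, 2]

lemma geom_core (X : Fin 4 → Fin 4 → Submodule ℂ V3) (m : Fin 4 → Fin 4 → Submodule ℂ V3)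
    (hX1 : ∀ a b, finrank ℂ (X a b) = 1)
    (hm2 : ∀ i c, finrank ℂ (m i c) = 2)
    (hmne : ∀ i j c d, i ≠ j → m i c ≠ m j d)
    (hinj : ∀ a b a' b', X a b = X a' b' → a = a' ∧ b = b')
    (h0 : ∀ a b, X a b ≤ m 0 a)
    (h1 : ∀ a b, X a b ≤ m 1 b)
    (h2 : ∀ a b, X a b ≤ m 2 (xor4 a b))
    (h3 : ∀ a b, X a b ≤ m 3 (xor4 (mw a) b)) : False := by
  classical
  have hXne : ∀ {a b a' b' : Fin 4}, ¬(a = a' ∧ b = b') → X a b ≠ X a' b' :=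
    fun h heq => h (hinj _ _ _ _ heq)
  -- spanning vectors for the four base points
  obtain ⟨u00, hu00, hs00⟩ := exists_spanning (hX1 0 0)
  obtain ⟨u01, hu01, hs01⟩ := exists_spanning (hX1 0 1)
  obtain ⟨u10, hu10, hs10⟩ := exists_spanning (hX1 1 0)
  obtain ⟨u11, hu11, hs11⟩ := exists_spanning (hX1 1 1)
  -- X 0 0 ⊔ X 0 1 ⊔ X 1 0 = ⊤
  have hl00 : m 0 0 = X 0 0 ⊔ X 0 1 :=
    line_eq_sup (hX1 0 0) (hX1 0 1) (hXne (by simp)) (hm2 0 0) (h0 0 0) (h0 0 1)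
  have hX10nm : ¬ X 1 0 ≤ m 0 0 := by
    intro hle
    have : m 0 0 = m 1 0 :=
      (line_eq_sup (hX1 0 0) (hX1 1 0) (hXne (by simp)) (hm2 0 0) (h0 0 0) hle).trans
        (line_eq_sup (hX1 0 0) (hX1 1 0) (hXne (by simp)) (hm2 1 0) (h1 0 0) (h1 1 0)).symm
    exact hmne 0 1 0 0 (by decide) this
  have htop : X 0 0 ⊔ X 0 1 ⊔ X 1 0 = ⊤ := by
    have hinf : finrank ℂ ↥((X 0 0 ⊔ X 0 1) ⊓ X 1 0) = 0 := by
      by_contra h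
      have hle : finrank ℂ ↥((X 0 0 ⊔ X 0 1) ⊓ X 1 0) ≤ 1 :=
        (hX1 1 0) ▸ Submodule.finrank_mono inf_le_right
      have h1' : finrank ℂ ↥((X 0 0 ⊔ X 0 1) ⊓ X 1 0) = 1 := by omega
      have : (X 0 0 ⊔ X 0 1) ⊓ X 1 0 = X 1 0 :=
        eq_of_le_of_finrank_le inf_le_right (by rw [h1', hX1 1 0])
      exact hX10nm (hl00 ▸ (this ▸ inf_le_left))
    have hr2 : finrank ℂ ↥(X 0 0 ⊔ X 0 1) = 2 := by rw [← hl00]; exact hm2 0 0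
    have := Submodule.finrank_sup_add_finrank_inf_eq (X 0 0 ⊔ X 0 1) (X 1 0)
    have hr3 : finrank ℂ ↥(X 0 0 ⊔ X 0 1 ⊔ X 1 0) = 3 := by
      rw [hr2, hX1 1 0, hinf] at this; omega
    have h4 : finrank ℂ (⊤ : Submodule ℂ V3) = 3 := by
      rw [finrank_top, Module.finrank_fin_fun]
    exact eq_of_le_of_finrank_le le_top (by omega)
  -- coefficients of u11
  have hmem : u11 ∈ span ℂ ({u00, u01, u10} : Set V3) := by
    have : u11 ∈ (⊤ : Submodule ℂ V3) := Submodule.mem_top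
    rw [← htop, hs00, hs01, hs10] at this
    rw [show ({u00, u01, u10} : Set V3) = insert u00 (insert u01 {u10}) from rfl,
      Submodule.span_insert, Submodule.span_insert, ← sup_assoc]
    exact this
  obtain ⟨α, z, hz, hceq⟩ := Submodule.mem_span_insert.1 hmem
  obtain ⟨β, z2, hz2, hceq2⟩ := Submodule.mem_span_insert.1 hz
  obtain ⟨γ, hz3⟩ := Submodule.mem_span_singleton.1 hz2
  have hu11eq : u11 = α • u00 + β • u01 + γ • u10 := by
    rw [hceq, hceq2, ← hz3]; module
  -- helper: two distinct points on two lines force the lines equal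
  have lines_eq : ∀ {P Q L L' : Submodule ℂ V3}, finrank ℂ P = 1 → finrank ℂ Q = 1 →
      P ≠ Q → finrank ℂ L = 2 → finrank ℂ L' = 2 →
      P ≤ L → Q ≤ L → P ≤ L' → Q ≤ L' → L = L' := by
    intro P Q L L' hP hQ hPQ hL hL' h1 h2 h3 h4
    exact (line_eq_sup hP hQ hPQ hL h1 h2).trans (line_eq_sup hP hQ hPQ hL' h3 h4).symm
  -- coefficients are nonzero
  have hα : α ≠ 0 := by
    rintro rfl
    have hm11 : u11 ∈ span ℂ ({u01, u10} : Set V3) :=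
      Submodule.mem_span_pair.2 ⟨β, γ, by rw [hu11eq]; module⟩
    have hsp : span ℂ ({u01, u10} : Set V3) ≤ m 2 1 := by
      rw [Submodule.span_le]
      rintro x (rfl | rfl)
      · have hh := h2 0 1
        rw [(by decide : xor4 0 1 = 1)] at hh
        exact hh ((hs01 ▸ Submodule.mem_span_singleton_self x))
      · have hh := h2 1 0
        rw [(by decide : xor4 1 0 = 1)] at hh
        exact hh ((hs10 ▸ Submodule.mem_span_singleton_self x))
    have hX11le : X 1 1 ≤ m 2 1 := by
      rw [hs11]
      exact (span_singleton_le_iff_mem _ _).2 (hsp hm11)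
    have hX01le : X 0 1 ≤ m 2 1 := by
      have := h2 0 1; rwa [(by decide : xor4 0 1 = 1)] at this
    exact hmne 1 2 1 1 (by decide)
      (lines_eq (hX1 0 1) (hX1 1 1) (hXne (by simp)) (hm2 1 1) (hm2 2 1)
        (h1 0 1) (h1 1 1) hX01le hX11le)
  have hβ : β ≠ 0 := by
    rintro rfl
    have hm11 : u11 ∈ span ℂ ({u00, u10} : Set V3) :=
      Submodule.mem_span_pair.2 ⟨α, γ, by rw [hu11eq]; module⟩
    have hsp : span ℂ ({u00, u10} : Set V3) ≤ m 1 0 := by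
      rw [Submodule.span_le]
      rintro x (rfl | rfl)
      · exact h1 0 0 ((hs00 ▸ Submodule.mem_span_singleton_self x))
      · exact h1 1 0 ((hs10 ▸ Submodule.mem_span_singleton_self x))
    have hX11le : X 1 1 ≤ m 1 0 := by
      rw [hs11]
      exact (span_singleton_le_iff_mem _ _).2 (hsp hm11)
    have hX00le : X 0 0 ≤ m 2 0 := by
      have := h2 0 0; rwa [(by decide : xor4 0 0 = 0)] at this
    have hX11le2 : X 1 1 ≤ m 2 0 := by
      have := h2 1 1; rwa [(by decide : xor4 1 1 = 0)] at this
    exact hmne 1 2 0 0 (by decide)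
      (lines_eq (hX1 0 0) (hX1 1 1) (hXne (by simp)) (hm2 1 0) (hm2 2 0)
        (h1 0 0) hX11le hX00le hX11le2)
  have hγ : γ ≠ 0 := by
    rintro rfl
    have hm11 : u11 ∈ span ℂ ({u00, u01} : Set V3) :=
      Submodule.mem_span_pair.2 ⟨α, β, by rw [hu11eq]; module⟩
    have hsp : span ℂ ({u00, u01} : Set V3) ≤ m 0 0 := by
      rw [Submodule.span_le]
      rintro x (rfl | rfl)
      · exact h0 0 0 ((hs00 ▸ Submodule.mem_span_singleton_self x))
      · exact h0 0 1 ((hs01 ▸ Submodule.mem_span_singleton_self x))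
    have hX11le : X 1 1 ≤ m 0 0 := by
      rw [hs11]
      exact (span_singleton_le_iff_mem _ _).2 (hsp hm11)
    exact hmne 0 1 0 1 (by decide)
      (lines_eq (hX1 0 1) (hX1 1 1) (hXne (by simp)) (hm2 0 0) (hm2 1 1)
        (h0 0 1) hX11le (h1 0 1) (h1 1 1))
  -- rescaled basis
  set v0 := α • u00 with hv0
  set v1 := β • u01 with hv1
  set v2 := γ • u10 with hv2
  have hsv0 : X 0 0 = ℂ ∙ v0 := by
    rw [hs00, hv0, Submodule.span_singleton_smul_eq (isUnit_iff_ne_zero.2 hα)]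
  have hsv1 : X 0 1 = ℂ ∙ v1 := by
    rw [hs01, hv1, Submodule.span_singleton_smul_eq (isUnit_iff_ne_zero.2 hβ)]
  have hsv2 : X 1 0 = ℂ ∙ v2 := by
    rw [hs10, hv2, Submodule.span_singleton_smul_eq (isUnit_iff_ne_zero.2 hγ)]
  have hu11v : u11 = v0 + v1 + v2 := by rw [hu11eq]
  -- the v's are linearly independent
  have hspan : span ℂ (Set.range ![v0, v1, v2]) = ⊤ := by
    have : Set.range ![v0, v1, v2] = {v0, v1, v2} := by
      ext x
      constructor
      · rintro ⟨i, rfl⟩; fin_cases i <;> simp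
      · rintro (rfl | rfl | rfl)
        exacts [⟨0, rfl⟩, ⟨1, rfl⟩, ⟨2, rfl⟩]
    rw [this, show ({v0, v1, v2} : Set V3) = insert v0 (insert v1 {v2}) from rfl,
      Submodule.span_insert, Submodule.span_insert, ← sup_assoc, ← hsv0, ← hsv1, ← hsv2]
    exact htop
  have hli : LinearIndependent ℂ ![v0, v1, v2] := by
    rw [linearIndependent_iff_card_eq_finrank_span]
    rw [Set.finrank, hspan, finrank_top, Module.finrank_fin_fun, Fintype.card_fin]
  -- basis and coordinate change
  have hcard : Fintype.card (Fin 3) = finrank ℂ V3 := by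
    rw [Module.finrank_fin_fun, Fintype.card_fin]
  set b : Basis (Fin 3) ℂ V3 := basisOfLinearIndependentOfCardEqFinrank hli hcard with hbdef
  have hb : ⇑b = ![v0, v1, v2] := coe_basisOfLinearIndependentOfCardEqFinrank hli hcard
  set e : V3 ≃ₗ[ℂ] V3 := b.equivFun with hedef
  have hev : ∀ i : Fin 3, e (![v0, v1, v2] i) = fun j => if i = j then 1 else 0 := by
    intro i
    funext j
    rw [← hb, hedef]
    exact b.equivFun_self i j
  have hev0 : e v0 = ![1, 0, 0] := by
    have h := hev 0
    rw [show (![v0, v1, v2] : Fin 3 → V3) 0 = v0 by simp] at h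
    rw [h]; funext j; fin_cases j <;> simp
  have hev1 : e v1 = ![0, 1, 0] := by
    have h := hev 1
    rw [show (![v0, v1, v2] : Fin 3 → V3) 1 = v1 by simp] at h
    rw [h]; funext j; fin_cases j <;> simp
  have hev2 : e v2 = ![0, 0, 1] := by
    have h := hev 2
    rw [show (![v0, v1, v2] : Fin 3 → V3) 2 = v2 by simp] at h
    rw [h]; funext j; fin_cases j <;> simp
  have hev11 : e u11 = ![1, 1, 1] := by
    rw [hu11v, map_add, map_add, hev0, hev1, hev2]
    funext j; fin_cases j <;> simp
  -- transported configuration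
  set Y : Fin 4 → Fin 4 → Submodule ℂ V3 :=
    fun a c => (X a c).map (e : V3 →ₗ[ℂ] V3) with hYdef
  set L : Fin 4 → Fin 4 → Submodule ℂ V3 :=
    fun i c => (m i c).map (e : V3 →ₗ[ℂ] V3) with hLdef
  have hY1 : ∀ a c, finrank ℂ (Y a c) = 1 := fun a c => by
    rw [hYdef]; rw [LinearEquiv.finrank_map_eq]; exact hX1 a c
  have hL2 : ∀ i c, finrank ℂ (L i c) = 2 := fun i c => by
    rw [hLdef]; rw [LinearEquiv.finrank_map_eq]; exact hm2 i c
  have hmapinj := Submodule.map_injective_of_injective (f := (e : V3 →ₗ[ℂ] V3)) e.injective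
  have hLne : ∀ i j c d, i ≠ j → L i c ≠ L j d := fun i j c d hij h =>
    hmne i j c d hij (hmapinj h)
  have hYne : ∀ {a c a' c' : Fin 4}, ¬(a = a' ∧ c = c') → Y a c ≠ Y a' c' :=
    fun h heq => h (hinj _ _ _ _ (hmapinj heq))
  have hY0 : ∀ a c, Y a c ≤ L 0 a := fun a c => Submodule.map_mono (h0 a c)
  have hY1' : ∀ a c, Y a c ≤ L 1 c := fun a c => Submodule.map_mono (h1 a c)
  have hY2 : ∀ a c, Y a c ≤ L 2 (xor4 a c) := fun a c => Submodule.map_mono (h2 a c)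
  have hY3 : ∀ a c, Y a c ≤ L 3 (xor4 (mw a) c) := fun a c => Submodule.map_mono (h3 a c)
  have map_sp : ∀ (x : V3) (W : Submodule ℂ V3), W = (ℂ ∙ x) →
      W.map (e : V3 →ₗ[ℂ] V3) = (ℂ ∙ (e x)) := by
    intro x W hW
    rw [hW, Submodule.map_span, Set.image_singleton]
    simp
  have hYs00 : Y 0 0 = (ℂ ∙ (![1, 0, 0] : V3)) := by
    show (X 0 0).map (e : V3 →ₗ[ℂ] V3) = _
    rw [map_sp v0 _ hsv0, hev0]
  have hYs01 : Y 0 1 = (ℂ ∙ (![0, 1, 0] : V3)) := by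
    show (X 0 1).map (e : V3 →ₗ[ℂ] V3) = _
    rw [map_sp v1 _ hsv1, hev1]
  have hYs10 : Y 1 0 = (ℂ ∙ (![0, 0, 1] : V3)) := by
    show (X 1 0).map (e : V3 →ₗ[ℂ] V3) = _
    rw [map_sp v2 _ hsv2, hev2]
  have hYs11 : Y 1 1 = (ℂ ∙ (![1, 1, 1] : V3)) := by
    show (X 1 1).map (e : V3 →ₗ[ℂ] V3) = _
    rw [map_sp u11 _ hs11, hev11]
  -- the line L 0 0 through Y00 Y01
  have hL00 : L 0 0 = span ℂ ({![1, 0, 0], ![0, 1, 0]} : Set V3) :=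
    line_eq_span_pair (hY1 0 0) (hY1 0 1) (hYne (by simp)) (hL2 0 0)
      (hY0 0 0) (hY0 0 1) hYs00 hYs01
  -- extract t2 from Y 0 2
  obtain ⟨w02, hw02, hw02s⟩ := exists_spanning (hY1 0 2)
  have hw02m : w02 ∈ span ℂ ({![1, 0, 0], ![0, 1, 0]} : Set V3) := by
    rw [← hL00]
    exact hY0 0 2 (hw02s ▸ Submodule.mem_span_singleton_self w02)
  obtain ⟨p2, q2, hpq2⟩ := Submodule.mem_span_pair.1 hw02m
  have hp2 : p2 ≠ 0 := by
    rintro rfl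
    have hq2 : q2 ≠ 0 := by
      rintro rfl
      apply hw02
      rw [← hpq2]; funext j; fin_cases j <;> simp
    apply hYne (show ¬((0:Fin 4) = 0 ∧ (2:Fin 4) = 1) by simp)
    rw [hw02s, hYs01, ← hpq2]
    rw [show (0:ℂ) • (![1, 0, 0] : V3) + q2 • ![0, 1, 0] = q2 • ![0, 1, 0] by module]
    rw [Submodule.span_singleton_smul_eq (isUnit_iff_ne_zero.2 hq2)]
  set t2 : ℂ := q2 / p2 with ht2def
  have hw02eq : w02 = p2 • ![1, t2, 0] := by
    rw [← hpq2]
    funext j; fin_cases j <;> simp [ht2def] <;> field_simp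
  have hYs02 : Y 0 2 = (ℂ ∙ (![1, t2, 0] : V3)) := by
    rw [hw02s, hw02eq, Submodule.span_singleton_smul_eq (isUnit_iff_ne_zero.2 hp2)]
  -- extract t3 from Y 0 3
  obtain ⟨w03, hw03, hw03s⟩ := exists_spanning (hY1 0 3)
  have hw03m : w03 ∈ span ℂ ({![1, 0, 0], ![0, 1, 0]} : Set V3) := by
    rw [← hL00]
    exact hY0 0 3 (hw03s ▸ Submodule.mem_span_singleton_self w03)
  obtain ⟨p3, q3, hpq3⟩ := Submodule.mem_span_pair.1 hw03m
  have hp3 : p3 ≠ 0 := by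
    rintro rfl
    have hq3 : q3 ≠ 0 := by
      rintro rfl
      apply hw03
      rw [← hpq3]; funext j; fin_cases j <;> simp
    apply hYne (show ¬((0:Fin 4) = 0 ∧ (3:Fin 4) = 1) by simp)
    rw [hw03s, hYs01, ← hpq3]
    rw [show (0:ℂ) • (![1, 0, 0] : V3) + q3 • ![0, 1, 0] = q3 • ![0, 1, 0] by module]
    rw [Submodule.span_singleton_smul_eq (isUnit_iff_ne_zero.2 hq3)]
  set t3 : ℂ := q3 / p3 with ht3def
  have hw03eq : w03 = p3 • ![1, t3, 0] := by
    rw [← hpq3]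
    funext j; fin_cases j <;> simp [ht3def] <;> field_simp
  have hYs03 : Y 0 3 = (ℂ ∙ (![1, t3, 0] : V3)) := by
    rw [hw03s, hw03eq, Submodule.span_singleton_smul_eq (isUnit_iff_ne_zero.2 hp3)]
  -- scalar nondegeneracies
  have ht2ne : t2 ≠ 0 := by
    intro h
    apply hYne (show ¬((0:Fin 4) = 0 ∧ (2:Fin 4) = 0) by simp)
    rw [hYs02, hYs00, h]
  have ht3ne : t3 ≠ 0 := by
    intro h
    apply hYne (show ¬((0:Fin 4) = 0 ∧ (3:Fin 4) = 0) by simp)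
    rw [hYs03, hYs00, h]
  have ht23 : t2 ≠ t3 := by
    intro h
    apply hYne (show ¬((0:Fin 4) = 0 ∧ (2:Fin 4) = 3) by simp)
    rw [hYs02, hYs03, h]
  -- incidence with rewritten indices
  have inc2 : ∀ a c cc, xor4 a c = cc → Y a c ≤ L 2 cc := fun a c cc h => h ▸ hY2 a c
  have inc3 : ∀ a c cc, xor4 (mw a) c = cc → Y a c ≤ L 3 cc := fun a c cc h => h ▸ hY3 a c
  -- line spans
  have hL20 : L 2 0 = span ℂ ({![1, 0, 0], ![1, 1, 1]} : Set V3) :=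
    line_eq_span_pair (hY1 0 0) (hY1 1 1) (hYne (by simp)) (hL2 2 0)
      (inc2 0 0 0 (by decide)) (inc2 1 1 0 (by decide)) hYs00 hYs11
  have hL32 : L 3 2 = span ℂ ({![1, t2, 0], ![0, 0, 1]} : Set V3) :=
    line_eq_span_pair (hY1 0 2) (hY1 1 0) (hYne (by simp)) (hL2 3 2)
      (inc3 0 2 2 (by decide)) (inc3 1 0 2 (by decide)) hYs02 hYs10
  have hYs33 : Y 3 3 = (ℂ ∙ (![1, t2, t2] : V3)) := by
    have h := point_of_two_lines (hY1 3 3) (hL2 2 0) (hL2 3 2) (hLne 2 3 0 2 (by decide))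
      (inc2 3 3 0 (by decide)) (inc3 3 3 2 (by decide)) hL20 hL32
    rw [h, show (![1, 0, 0] ⨯₃ ![1, 1, 1]) ⨯₃ (![1, t2, 0] ⨯₃ ![0, 0, 1]) =
      (![1, t2, t2] : V3) by funext i; fin_cases i <;> simp [cross_apply] <;> ring]
  have hL21 : L 2 1 = span ℂ ({![0, 1, 0], ![0, 0, 1]} : Set V3) :=
    line_eq_span_pair (hY1 0 1) (hY1 1 0) (hYne (by simp)) (hL2 2 1)
      (inc2 0 1 1 (by decide)) (inc2 1 0 1 (by decide)) hYs01 hYs10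
  have hL33 : L 3 3 = span ℂ ({![1, t3, 0], ![1, 1, 1]} : Set V3) :=
    line_eq_span_pair (hY1 0 3) (hY1 1 1) (hYne (by simp)) (hL2 3 3)
      (inc3 0 3 3 (by decide)) (inc3 1 1 3 (by decide)) hYs03 hYs11
  have hYs32 : Y 3 2 = (ℂ ∙ (![0, t3 - 1, -1] : V3)) := by
    have h := point_of_two_lines (hY1 3 2) (hL2 2 1) (hL2 3 3) (hLne 2 3 1 3 (by decide))
      (inc2 3 2 1 (by decide)) (inc3 3 2 3 (by decide)) hL21 hL33
    rw [h, show (![0, 1, 0] ⨯₃ ![0, 0, 1]) ⨯₃ (![1, t3, 0] ⨯₃ ![1, 1, 1]) =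
      (![0, t3 - 1, -1] : V3) by funext i; fin_cases i <;> simp [cross_apply] <;> ring]
  have hL01 : L 0 1 = span ℂ ({![0, 0, 1], ![1, 1, 1]} : Set V3) :=
    line_eq_span_pair (hY1 1 0) (hY1 1 1) (hYne (by simp)) (hL2 0 1)
      (hY0 1 0) (hY0 1 1) hYs10 hYs11
  have hL13 : L 1 3 = span ℂ ({![1, t3, 0], ![1, t2, t2]} : Set V3) :=
    line_eq_span_pair (hY1 0 3) (hY1 3 3) (hYne (by simp)) (hL2 1 3)
      (hY1' 0 3) (hY1' 3 3) hYs03 hYs33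
  have hYs13 : Y 1 3 = (ℂ ∙ (![t2 - t3, t2 - t3, t2 - t2 * t3] : V3)) := by
    have h := point_of_two_lines (hY1 1 3) (hL2 0 1) (hL2 1 3) (hLne 0 1 1 3 (by decide))
      (hY0 1 3) (hY1' 1 3) hL01 hL13
    rw [h, show (![0, 0, 1] ⨯₃ ![1, 1, 1]) ⨯₃ (![1, t3, 0] ⨯₃ ![1, t2, t2]) =
      (![t2 - t3, t2 - t3, t2 - t2 * t3] : V3) by
        funext i; fin_cases i <;> simp [cross_apply] <;> ring]
  have hL03 : L 0 3 = span ℂ ({![0, t3 - 1, -1], ![1, t2, t2]} : Set V3) :=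
    line_eq_span_pair (hY1 3 2) (hY1 3 3) (hYne (by simp)) (hL2 0 3)
      (hY0 3 2) (hY0 3 3) hYs32 hYs33
  have hL10 : L 1 0 = span ℂ ({![1, 0, 0], ![0, 0, 1]} : Set V3) :=
    line_eq_span_pair (hY1 0 0) (hY1 1 0) (hYne (by simp)) (hL2 1 0)
      (hY1' 0 0) (hY1' 1 0) hYs00 hYs10
  have hYs30 : Y 3 0 = (ℂ ∙ (![1 - t3, 0, -(t2 * t3)] : V3)) := by
    have h := point_of_two_lines (hY1 3 0) (hL2 0 3) (hL2 1 0) (hLne 0 1 3 0 (by decide))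
      (hY0 3 0) (hY1' 3 0) hL03 hL10
    rw [h, show (![0, t3 - 1, -1] ⨯₃ ![1, t2, t2]) ⨯₃ (![1, 0, 0] ⨯₃ ![0, 0, 1]) =
      (![1 - t3, 0, -(t2 * t3)] : V3) by
        funext i; fin_cases i <;> simp [cross_apply] <;> ring]
  have hL11 : L 1 1 = span ℂ ({![0, 1, 0], ![1, 1, 1]} : Set V3) :=
    line_eq_span_pair (hY1 0 1) (hY1 1 1) (hYne (by simp)) (hL2 1 1)
      (hY1' 0 1) (hY1' 1 1) hYs01 hYs11
  have hYs31 : Y 3 1 = (ℂ ∙ (![1, 1 - t3 + t2 * t3, 1] : V3)) := by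
    have h := point_of_two_lines (hY1 3 1) (hL2 0 3) (hL2 1 1) (hLne 0 1 3 1 (by decide))
      (hY0 3 1) (hY1' 3 1) hL03 hL11
    rw [h, show (![0, t3 - 1, -1] ⨯₃ ![1, t2, t2]) ⨯₃ (![0, 1, 0] ⨯₃ ![1, 1, 1]) =
      (![1, 1 - t3 + t2 * t3, 1] : V3) by
        funext i; fin_cases i <;> simp [cross_apply] <;> ring]
  -- the two determinant constraints
  have mem31 : ∀ {a c : Fin 4} {u : V3}, xor4 (mw a) c = 1 → Y a c = (ℂ ∙ u) →
      u ∈ L 3 1 := fun h hs => (inc3 _ _ 1 h) (hs ▸ Submodule.mem_span_singleton_self _)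
  have mem22 : ∀ {a c : Fin 4} {u : V3}, xor4 a c = 2 → Y a c = (ℂ ∙ u) →
      u ∈ L 2 2 := fun h hs => (inc2 _ _ 2 h) (hs ▸ Submodule.mem_span_singleton_self _)
  have d1 : Matrix.det ![![0, 1, 0], ![t2 - t3, t2 - t3, t2 - t2 * t3],
      ![1 - t3, 0, -(t2 * t3)]] = 0 :=
    det_eq_zero_of_mem (hL2 3 1) (mem31 (by decide) hYs01) (mem31 (by decide) hYs13)
      (mem31 (by decide) hYs30)
  have d2 : Matrix.det ![![1, t2, 0], ![t2 - t3, t2 - t3, t2 - t2 * t3],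
      ![1, 1 - t3 + t2 * t3, 1]] = 0 :=
    det_eq_zero_of_mem (hL2 2 2) (mem22 (by decide) hYs02) (mem22 (by decide) hYs13)
      (mem22 (by decide) hYs31)
  replace d1 := (Matrix.det_fin_three _).symm.trans d1
  replace d2 := (Matrix.det_fin_three _).symm.trans d2
  simp only [Matrix.cons_val_zero, Matrix.cons_val_one, Matrix.head_cons,
    Matrix.cons_val_two, Matrix.tail_cons, Matrix.head_fin_const] at d1 d2
  have hA : t2 * t3 - 2 * t3 + 1 = 0 := by
    rcases mul_eq_zero.1 (show t2 * (t2 * t3 - 2 * t3 + 1) = 0 by linear_combination d1)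
      with h | h
    · exact absurd h ht2ne
    · exact h
  have hB' : (t2 - 1) * (t3 * (t2 * t3 - 2 * t2 + 1)) = 0 := by linear_combination d2
  rcases mul_eq_zero.1 hB' with h | h
  · have ht2one : t2 = 1 := by linear_combination h
    rw [ht2one] at hA
    have ht3one : t3 = 1 := by linear_combination -hA
    exact ht23 (by rw [ht2one, ht3one])
  · rcases mul_eq_zero.1 h with h' | h'
    · exact absurd h' ht3ne
    · exact ht23 (by linear_combination (hA - h') / 2)






lemma mols_classify (L M : Fin 4 → Fin 4 → Fin 4)
    (hLr : ∀ a : Fin 4, ∀ {b b' : Fin 4}, L a b = L a b' → b = b')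
    (hLc : ∀ b : Fin 4, ∀ {a a' : Fin 4}, L a b = L a' b → a = a')
    (hMr : ∀ a : Fin 4, ∀ {b b' : Fin 4}, M a b = M a b' → b = b')
    (hMc : ∀ b : Fin 4, ∀ {a a' : Fin 4}, M a b = M a' b → a = a')
    (hL0 : ∀ b, L 0 b = b) (hLa0 : ∀ a, L a 0 = a) (hM0 : ∀ b, M 0 b = b)
    (hOr : ∀ a b a' b' : Fin 4, L a b = L a' b' → M a b = M a' b' → a = a' ∧ b = b') :
    (∀ a b, L a b = xor4 a b) ∧
      ((∀ a b, M a b = xor4 (mw a) b) ∨ (∀ a b, M a b = xor4 (mw2 a) b)) := by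
  have allFin4 : ∀ {P : Fin 4 → Prop}, P 0 → P 1 → P 2 → P 3 → ∀ a, P a := by
    intro P h0 h1 h2 h3 a
    fin_cases a <;> assumption
  have hLrne : ∀ a : Fin 4, ∀ {b b' : Fin 4}, b ≠ b' → L a b ≠ L a b' := by
    intro a b b' h h2; exact h (hLr a h2)
  have hLcne : ∀ b : Fin 4, ∀ {a a' : Fin 4}, a ≠ a' → L a b ≠ L a' b := by
    intro b a a' h h2; exact h (hLc b h2)
  have hMrne : ∀ a : Fin 4, ∀ {b b' : Fin 4}, b ≠ b' → M a b ≠ M a b' := by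
    intro a b b' h h2; exact h (hMr a h2)
  have hMcne : ∀ b : Fin 4, ∀ {a a' : Fin 4}, a ≠ a' → M a b ≠ M a' b := by
    intro b a a' h h2; exact h (hMc b h2)
  have horth : ∀ {a b a' b' : Fin 4}, ¬(a = a' ∧ b = b') → L a b = L a' b' →
      M a b ≠ M a' b' := by
    intro a b a' b' h hL hM; exact h (hOr _ _ _ _ hL hM)

  rcases (by decide : ∀ x1 x2 x3 : Fin 4, (x1 ≠ 1 ∧ x2 ≠ 1 ∧ x3 ≠ 1 ∧ x1 ≠ x2 ∧ x1 ≠ x3 ∧ x2 ≠ x3 ∧ x1 ≠ 1 ∧ x2 ≠ 2 ∧ x3 ≠ 3) → ((x1 = 0 ∧ x2 = 3 ∧ x3 = 2) ∨ (x1 = 2 ∧ x2 = 3 ∧ x3 = 0) ∨ (x1 = 3 ∧ x2 = 0 ∧ x3 = 2))) (L 1 1) (L 1 2) (L 1 3) ⟨fun h => hLrne 1 (by decide) (h.trans (hLa0 1).symm), fun h => hLrne 1 (by decide) (h.trans (hLa0 1).symm), fun h => hLrne 1 (by decide) (h.trans (hLa0 1).symm), hLrne 1 (by decide), hLrne 1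 (by decide), hLrne 1 (by decide), fun h => hLcne 1 (by decide) (h.trans (hL0 1).symm), fun h => hLcne 2 (by decide) (h.trans (hL0 2).symm), fun h => hLcne 3 (by decide) (h.trans (hL0 3).symm)⟩ with ⟨HL11, HL12, HL13⟩ | ⟨HL11, HL12, HL13⟩ | ⟨HL11, HL12, HL13⟩
  ·
    rcases (by decide : ∀ x1 x2 x3 : Fin 4, (x1 ≠ 2 ∧ x2 ≠ 2 ∧ x3 ≠ 2 ∧ x1 ≠ x2 ∧ x1 ≠ x3 ∧ x2 ≠ x3 ∧ x1 ≠ 1 ∧ x1 ≠ 0 ∧ x2 ≠ 2 ∧ x2 ≠ 3 ∧ x3 ≠ 3 ∧ x3 ≠ 2) → ((x1 = 3 ∧ x2 = 0 ∧ x3 = 1) ∨ (x1 = 3 ∧ x2 = 1 ∧ x3 = 0))) (L 2 1) (L 2 2) (L 2 3) ⟨fun h => hLrne 2 (by decide) (h.trans (hLa0 2).symm), fun h => hLrne 2 (by decide) (h.trans (hLa0 2).symm), fun h => hLrne 2 (by decide) (h.trans (hLa0 2).symm), hLrne 2 (by decide), hLrne 2 (by decide), hLrne 2 (by decide), fun h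 => hLcne 1 (by decide) (h.trans (hL0 1).symm), fun h => hLcne 1 (by decide) (h.trans HL11.symm), fun h => hLcne 2 (by decide) (h.trans (hL0 2).symm), fun h => hLcne 2 (by decide) (h.trans HL12.symm), fun h => hLcne 3 (by decide) (h.trans (hL0 3).symm), fun h => hLcne 3 (by decide) (h.trans HL13.symm)⟩ with ⟨HL21, HL22, HL23⟩ | ⟨HL21, HL22, HL23⟩
    ·
      rcases (by decide : ∀ x1 x2 x3 : Fin 4, (x1 ≠ 3 ∧ x2 ≠ 3 ∧ x3 ≠ 3 ∧ x1 ≠ x2 ∧ x1 ≠ x3 ∧ x2 ≠ x3 ∧ x1 ≠ 1 ∧ x1 ≠ 0 ∧ x1 ≠ 3 ∧ x2 ≠ 2 ∧ x2 ≠ 3 ∧ x2 ≠ 0 ∧ x3 ≠ 3 ∧ x3 ≠ 2 ∧ x3 ≠ 1) → ((x1 = 2 ∧ x2 = 1 ∧ x3 = 0))) (L 3 1) (L 3 2) (L 3 3) ⟨fun h => hLrne 3 (by decide) (h.trans (hLa0 3).symm), fun h => hLrne 3 (by decide) (h.trans (hLa0 3).symm), fun h => hLrne 3 (by decide) (h.trans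 (hLa0 3).symm), hLrne 3 (by decide), hLrne 3 (by decide), hLrne 3 (by decide), fun h => hLcne 1 (by decide) (h.trans (hL0 1).symm), fun h => hLcne 1 (by decide) (h.trans HL11.symm), fun h => hLcne 1 (by decide) (h.trans HL21.symm), fun h => hLcne 2 (by decide) (h.trans (hL0 2).symm), fun h => hLcne 2 (by decide) (h.trans HL12.symm), fun h => hLcne 2 (by decide) (h.trans HL22.symm), fun h => hLcne 3 (by decide) (h.trans (hL0 3).symm), fun h => hLcne 3 (by decide) (h.trans HL13.symm), fun h => hLcne 3 (by decide) (h.trans HL23.symm)⟩ with ⟨HL31, HL32, HL33⟩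
      ·
        rcases (by decide : ∀ y0 y1 y2 y3 : Fin 4, (y0 ≠ y1 ∧ y0 ≠ y2 ∧ y0 ≠ y3 ∧ y1 ≠ y2 ∧ y1 ≠ y3 ∧ y2 ≠ y3 ∧ y0 ≠ 0 ∧ y1 ≠ 1 ∧ y2 ≠ 2 ∧ y3 ≠ 3 ∧ y0 ≠ 1 ∧ y1 ≠ 0 ∧ y2 ≠ 3 ∧ y3 ≠ 2) → ((y0 = 2 ∧ y1 = 3 ∧ y2 = 0 ∧ y3 = 1) ∨ (y0 = 2 ∧ y1 = 3 ∧ y2 = 1 ∧ y3 = 0) ∨ (y0 = 3 ∧ y1 = 2 ∧ y2 = 0 ∧ y3 = 1) ∨ (y0 = 3 ∧ y1 = 2 ∧ y2 = 1 ∧ y3 = 0))) (M 1 0) (M 1 1) (M 1 2) (M 1 3) ⟨hMrne 1 (by decide), hMrne 1 (by decide), hMrne 1 (by decide), hMrne 1 (by decide), hMrne 1 (by decide), hMrne 1 (by decide), fun h => hMcne 0 (by decide) (h.trans (hM0 0).symm), fun h => hMcne 1 (by decide) (h.trans (hM0 1).symm), fun h => hMcne 2 (by decide) (h.trans (hM0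 2).symm), fun h => hMcne 3 (by decide) (h.trans (hM0 3).symm), fun h => horth (a := 1) (b := 0) (a' := 0) (b' := 1) (by decide) (by rw [(hLa0 1), (hL0 1)]) (h.trans (hM0 1).symm), fun h => horth (a := 1) (b := 1) (a' := 0) (b' := 0) (by decide) (by rw [HL11, (hL0 0)]) (h.trans (hM0 0).symm), fun h => horth (a := 1) (b := 2) (a' := 0) (b' := 3) (by decide) (by rw [HL12, (hL0 3)]) (h.trans (hM0 3).symm), fun h => horth (a := 1) (b := 3) (a' := 0) (b' := 2) (by decide) (by rw [HL13, (hL0 2)]) (h.trans (hM0 2).symm)⟩ with ⟨HM10, HM11, HM12, HM13⟩ | ⟨HM10, HM11, HM12, HM13⟩ | ⟨HM10, HM11, HM12, HM13⟩ | ⟨HM10, HM11, HM12, HM13⟩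
        ·
          rcases (by decide : ∀ y0 y1 y2 y3 : Fin 4, (y0 ≠ y1 ∧ y0 ≠ y2 ∧ y0 ≠ y3 ∧ y1 ≠ y2 ∧ y1 ≠ y3 ∧ y2 ≠ y3 ∧ y0 ≠ 0 ∧ y0 ≠ 2 ∧ y1 ≠ 1 ∧ y1 ≠ 3 ∧ y2 ≠ 2 ∧ y2 ≠ 0 ∧ y3 ≠ 3 ∧ y3 ≠ 1 ∧ y0 ≠ 2 ∧ y0 ≠ 1 ∧ y1 ≠ 3 ∧ y1 ≠ 0 ∧ y2 ≠ 0 ∧ y2 ≠ 3 ∧ y3 ≠ 1 ∧ y3 ≠ 2) → ((y0 = 3 ∧ y1 = 2 ∧ y2 = 1 ∧ y3 = 0))) (M 2 0) (M 2 1) (M 2 2) (M 2 3) ⟨hMrne 2 (by decide), hMrne 2 (by decide), hMrne 2 (by decide), hMrne 2 (by decide), hMrne 2 (by decide), hMrne 2 (by decide), fun h => hMcne 0 (by decide) (h.trans (hM0 0).symm), fun h => hMcne 0 (by decide) (h.trans HM10.symm), fun h => hMcne 1 (by decide) (h.trans (hM0 1).symm), fun h => hMcne 1 (by decide) (h.trans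 HM11.symm), fun h => hMcne 2 (by decide) (h.trans (hM0 2).symm), fun h => hMcne 2 (by decide) (h.trans HM12.symm), fun h => hMcne 3 (by decide) (h.trans (hM0 3).symm), fun h => hMcne 3 (by decide) (h.trans HM13.symm), fun h => horth (a := 2) (b := 0) (a' := 0) (b' := 2) (by decide) (by rw [(hLa0 2), (hL0 2)]) (h.trans (hM0 2).symm), fun h => horth (a := 2) (b := 0) (a' := 1) (b' := 3) (by decide) (by rw [(hLa0 2), HL13]) (h.trans HM13.symm), fun h => horth (a := 2) (b := 1) (a' := 0) (b' := 3) (by decide) (by rw [HL21, (hL0 3)]) (h.trans (hM0 3).symm), fun h => horth (a := 2) (b := 1) (a' := 1) (b' := 2) (by decide) (by rw [HL21, HL12]) (h.trans HM12.symm), fun h => horth (a := 2) (b := 2) (a' := 0) (b' := 0) (by decide) (by rw [HL22, (hL0 0)]) (h.trans (hM0 0).symm), fun h => horth (a := 2) (b := 2) (a' := 1) (b' := 1) (by decide) (by rw [HL22, HL11]) (h.trans HM11.symm), fun h => horth (a := 2) (b := 3) (a' := 0) (b' := 1) (by decide) (by rw [HL23, (hL0 1)]) (h.trans (hM0 1).symm),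 fun h => horth (a := 2) (b := 3) (a' := 1) (b' := 0) (by decide) (by rw [HL23, (hLa0 1)]) (h.trans HM10.symm)⟩ with ⟨HM20, HM21, HM22, HM23⟩
          ·
            rcases (by decide : ∀ y0 y1 y2 y3 : Fin 4, (y0 ≠ y1 ∧ y0 ≠ y2 ∧ y0 ≠ y3 ∧ y1 ≠ y2 ∧ y1 ≠ y3 ∧ y2 ≠ y3 ∧ y0 ≠ 0 ∧ y0 ≠ 2 ∧ y0 ≠ 3 ∧ y1 ≠ 1 ∧ y1 ≠ 3 ∧ y1 ≠ 2 ∧ y2 ≠ 2 ∧ y2 ≠ 0 ∧ y2 ≠ 1 ∧ y3 ≠ 3 ∧ y3 ≠ 1 ∧ y3 ≠ 0 ∧ y0 ≠ 3 ∧ y0 ≠ 0 ∧ y0 ≠ 2 ∧ y1 ≠ 2 ∧ y1 ≠ 1 ∧ y1 ≠ 3 ∧ y2 ≠ 1 ∧ y2 ≠ 2 ∧ y2 ≠ 0 ∧ y3 ≠ 0 ∧ y3 ≠ 3 ∧ y3 ≠ 1) → ((y0 = 1 ∧ y1 = 0 ∧ y2 = 3 ∧ y3 = 2))) (M 3 0)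 (M 3 1) (M 3 2) (M 3 3) ⟨hMrne 3 (by decide), hMrne 3 (by decide), hMrne 3 (by decide), hMrne 3 (by decide), hMrne 3 (by decide), hMrne 3 (by decide), fun h => hMcne 0 (by decide) (h.trans (hM0 0).symm), fun h => hMcne 0 (by decide) (h.trans HM10.symm), fun h => hMcne 0 (by decide) (h.trans HM20.symm), fun h => hMcne 1 (by decide) (h.trans (hM0 1).symm), fun h => hMcne 1 (by decide) (h.trans HM11.symm), fun h => hMcne 1 (by decide) (h.trans HM21.symm), fun h => hMcne 2 (by decide) (h.trans (hM0 2).symm), fun h => hMcne 2 (by decide) (h.trans HM12.symm), fun h => hMcne 2 (by decide) (h.trans HM22.symm), fun h => hMcne 3 (by decide) (h.trans (hM0 3).symm), fun h => hMcne 3 (by decide) (h.trans HM13.symm), fun h => hMcne 3 (by decide) (h.trans HM23.symm), fun h => horth (a := 3) (b := 0) (a' := 0) (b' := 3) (by decide) (by rw [(hLa0 3), (hL0 3)]) (h.trans (hM0 3).symm), fun h => horth (a := 3) (b := 0) (a' := 1) (b' := 2) (by decide) (by rw [(hLa0 3), HL12]) (h.trans HM12.symm), fun h => horth (a := 3) (b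 := 0) (a' := 2) (b' := 1) (by decide) (by rw [(hLa0 3), HL21]) (h.trans HM21.symm), fun h => horth (a := 3) (b := 1) (a' := 0) (b' := 2) (by decide) (by rw [HL31, (hL0 2)]) (h.trans (hM0 2).symm), fun h => horth (a := 3) (b := 1) (a' := 1) (b' := 3) (by decide) (by rw [HL31, HL13]) (h.trans HM13.symm), fun h => horth (a := 3) (b := 1) (a' := 2) (b' := 0) (by decide) (by rw [HL31, (hLa0 2)]) (h.trans HM20.symm), fun h => horth (a := 3) (b := 2) (a' := 0) (b' := 1) (by decide) (by rw [HL32, (hL0 1)]) (h.trans (hM0 1).symm), fun h => horth (a := 3) (b := 2) (a' := 1) (b' := 0) (by decide) (by rw [HL32, (hLa0 1)]) (h.trans HM10.symm), fun h => horth (a := 3) (b := 2) (a' := 2) (b' := 3) (by decide) (by rw [HL32, HL23]) (h.trans HM23.symm), fun h => horth (a := 3) (b := 3) (a' := 0) (b' := 0) (by decide) (by rw [HL33, (hL0 0)]) (h.trans (hM0 0).symm), fun h => horth (a := 3) (b := 3) (a' := 1) (b' := 1) (by decide) (by rw [HL33, HL11]) (h.trans HM11.symm), fun h => horth (a := 3)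 (b := 3) (a' := 2) (b' := 2) (by decide) (by rw [HL33, HL22]) (h.trans HM22.symm)⟩ with ⟨HM30, HM31, HM32, HM33⟩
            ·
              refine ⟨?_, Or.inl ?_⟩
              · exact allFin4 (allFin4 (by rw [(hL0 0)]; decide) (by rw [(hL0 1)]; decide) (by rw [(hL0 2)]; decide) (by rw [(hL0 3)]; decide)) (allFin4 (by rw [(hLa0 1)]; decide) (by rw [HL11]; decide) (by rw [HL12]; decide) (by rw [HL13]; decide)) (allFin4 (by rw [(hLa0 2)]; decide) (by rw [HL21]; decide) (by rw [HL22]; decide) (by rw [HL23]; decide)) (allFin4 (by rw [(hLa0 3)]; decide) (by rw [HL31]; decide) (by rw [HL32]; decide) (by rw [HL33]; decide))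
              · exact allFin4 (allFin4 (by rw [(hM0 0)]; decide) (by rw [(hM0 1)]; decide) (by rw [(hM0 2)]; decide) (by rw [(hM0 3)]; decide)) (allFin4 (by rw [HM10]; decide) (by rw [HM11]; decide) (by rw [HM12]; decide) (by rw [HM13]; decide)) (allFin4 (by rw [HM20]; decide) (by rw [HM21]; decide) (by rw [HM22]; decide) (by rw [HM23]; decide)) (allFin4 (by rw [HM30]; decide) (by rw [HM31]; decide) (by rw [HM32]; decide) (by rw [HM33]; decide))
        ·
          exact ((by decide : ∀ y0 y1 y2 y3 : Fin 4, (y0 ≠ y1 ∧ y0 ≠ y2 ∧ y0 ≠ y3 ∧ y1 ≠ y2 ∧ y1 ≠ y3 ∧ y2 ≠ y3 ∧ y0 ≠ 0 ∧ y0 ≠ 2 ∧ y1 ≠ 1 ∧ y1 ≠ 3 ∧ y2 ≠ 2 ∧ y2 ≠ 1 ∧ y3 ≠ 3 ∧ y3 ≠ 0 ∧ y0 ≠ 2 ∧ y0 ≠ 0 ∧ y1 ≠ 3 ∧ y1 ≠ 1 ∧ y2 ≠ 0 ∧ y2 ≠ 3 ∧ y3 ≠ 1 ∧ y3 ≠ 2)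 → (False)) (M 2 0) (M 2 1) (M 2 2) (M 2 3) ⟨hMrne 2 (by decide), hMrne 2 (by decide), hMrne 2 (by decide), hMrne 2 (by decide), hMrne 2 (by decide), hMrne 2 (by decide), fun h => hMcne 0 (by decide) (h.trans (hM0 0).symm), fun h => hMcne 0 (by decide) (h.trans HM10.symm), fun h => hMcne 1 (by decide) (h.trans (hM0 1).symm), fun h => hMcne 1 (by decide) (h.trans HM11.symm), fun h => hMcne 2 (by decide) (h.trans (hM0 2).symm), fun h => hMcne 2 (by decide) (h.trans HM12.symm), fun h => hMcne 3 (by decide) (h.trans (hM0 3).symm), fun h => hMcne 3 (by decide) (h.trans HM13.symm), fun h => horth (a := 2) (b := 0) (a' := 0) (b' := 2) (by decide) (by rw [(hLa0 2), (hL0 2)]) (h.trans (hM0 2).symm), fun h => horth (a := 2) (b := 0) (a' := 1) (b' := 3) (by decide) (by rw [(hLa0 2), HL13]) (h.trans HM13.symm), fun h => horth (a := 2) (b := 1) (a' := 0) (b' := 3) (by decide) (by rw [HL21, (hL0 3)]) (h.trans (hM0 3).symm), fun h => horth (a := 2) (b := 1) (a' := 1) (b' := 2) (by decide) (by rw [HL21,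 HL12]) (h.trans HM12.symm), fun h => horth (a := 2) (b := 2) (a' := 0) (b' := 0) (by decide) (by rw [HL22, (hL0 0)]) (h.trans (hM0 0).symm), fun h => horth (a := 2) (b := 2) (a' := 1) (b' := 1) (by decide) (by rw [HL22, HL11]) (h.trans HM11.symm), fun h => horth (a := 2) (b := 3) (a' := 0) (b' := 1) (by decide) (by rw [HL23, (hL0 1)]) (h.trans (hM0 1).symm), fun h => horth (a := 2) (b := 3) (a' := 1) (b' := 0) (by decide) (by rw [HL23, (hLa0 1)]) (h.trans HM10.symm)⟩).elim
        ·
          exact ((by decide : ∀ y0 y1 y2 y3 : Fin 4, (y0 ≠ y1 ∧ y0 ≠ y2 ∧ y0 ≠ y3 ∧ y1 ≠ y2 ∧ y1 ≠ y3 ∧ y2 ≠ y3 ∧ y0 ≠ 0 ∧ y0 ≠ 3 ∧ y1 ≠ 1 ∧ y1 ≠ 2 ∧ y2 ≠ 2 ∧ y2 ≠ 0 ∧ y3 ≠ 3 ∧ y3 ≠ 1 ∧ y0 ≠ 2 ∧ y0 ≠ 1 ∧ y1 ≠ 3 ∧ y1 ≠ 0 ∧ y2 ≠ 0 ∧ y2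 ≠ 2 ∧ y3 ≠ 1 ∧ y3 ≠ 3) → (False)) (M 2 0) (M 2 1) (M 2 2) (M 2 3) ⟨hMrne 2 (by decide), hMrne 2 (by decide), hMrne 2 (by decide), hMrne 2 (by decide), hMrne 2 (by decide), hMrne 2 (by decide), fun h => hMcne 0 (by decide) (h.trans (hM0 0).symm), fun h => hMcne 0 (by decide) (h.trans HM10.symm), fun h => hMcne 1 (by decide) (h.trans (hM0 1).symm), fun h => hMcne 1 (by decide) (h.trans HM11.symm), fun h => hMcne 2 (by decide) (h.trans (hM0 2).symm), fun h => hMcne 2 (by decide) (h.trans HM12.symm), fun h => hMcne 3 (by decide) (h.trans (hM0 3).symm), fun h => hMcne 3 (by decide) (h.trans HM13.symm), fun h => horth (a := 2) (b := 0) (a' := 0) (b' := 2) (by decide) (by rw [(hLa0 2), (hL0 2)]) (h.trans (hM0 2).symm), fun h => horth (a := 2) (b := 0) (a' := 1) (b' := 3) (by decide) (by rw [(hLa0 2), HL13]) (h.trans HM13.symm), fun h => horth (a := 2) (b := 1) (a' := 0) (b' := 3) (by decide) (by rw [HL21, (hL0 3)]) (h.trans (hM0 3).symm), fun h => horth (a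 := 2) (b := 1) (a' := 1) (b' := 2) (by decide) (by rw [HL21, HL12]) (h.trans HM12.symm), fun h => horth (a := 2) (b := 2) (a' := 0) (b' := 0) (by decide) (by rw [HL22, (hL0 0)]) (h.trans (hM0 0).symm), fun h => horth (a := 2) (b := 2) (a' := 1) (b' := 1) (by decide) (by rw [HL22, HL11]) (h.trans HM11.symm), fun h => horth (a := 2) (b := 3) (a' := 0) (b' := 1) (by decide) (by rw [HL23, (hL0 1)]) (h.trans (hM0 1).symm), fun h => horth (a := 2) (b := 3) (a' := 1) (b' := 0) (by decide) (by rw [HL23, (hLa0 1)]) (h.trans HM10.symm)⟩).elim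
        ·
          rcases (by decide : ∀ y0 y1 y2 y3 : Fin 4, (y0 ≠ y1 ∧ y0 ≠ y2 ∧ y0 ≠ y3 ∧ y1 ≠ y2 ∧ y1 ≠ y3 ∧ y2 ≠ y3 ∧ y0 ≠ 0 ∧ y0 ≠ 3 ∧ y1 ≠ 1 ∧ y1 ≠ 2 ∧ y2 ≠ 2 ∧ y2 ≠ 1 ∧ y3 ≠ 3 ∧ y3 ≠ 0 ∧ y0 ≠ 2 ∧ y0 ≠ 0 ∧ y1 ≠ 3 ∧ y1 ≠ 1 ∧ y2 ≠ 0 ∧ y2 ≠ 2 ∧ y3 ≠ 1 ∧ y3 ≠ 3) → ((y0 = 1 ∧ y1 = 0 ∧ y2 = 3 ∧ y3 = 2))) (M 2 0) (M 2 1) (M 2 2) (M 2 3) ⟨hMrne 2 (by decide), hMrne 2 (by decide), hMrne 2 (by decide), hMrne 2 (by decide), hMrne 2 (by decide), hMrne 2 (by decide), fun h => hMcne 0 (by decide) (h.trans (hM0 0).symm), fun h => hMcne 0 (by decide) (h.trans HM10.symm), fun h => hMcne 1 (by decide) (h.trans (hM0 1).symm), fun h => hMcne 1 (by decide) (h.trans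 HM11.symm), fun h => hMcne 2 (by decide) (h.trans (hM0 2).symm), fun h => hMcne 2 (by decide) (h.trans HM12.symm), fun h => hMcne 3 (by decide) (h.trans (hM0 3).symm), fun h => hMcne 3 (by decide) (h.trans HM13.symm), fun h => horth (a := 2) (b := 0) (a' := 0) (b' := 2) (by decide) (by rw [(hLa0 2), (hL0 2)]) (h.trans (hM0 2).symm), fun h => horth (a := 2) (b := 0) (a' := 1) (b' := 3) (by decide) (by rw [(hLa0 2), HL13]) (h.trans HM13.symm), fun h => horth (a := 2) (b := 1) (a' := 0) (b' := 3) (by decide) (by rw [HL21, (hL0 3)]) (h.trans (hM0 3).symm), fun h => horth (a := 2) (b := 1) (a' := 1) (b' := 2) (by decide) (by rw [HL21, HL12]) (h.trans HM12.symm), fun h => horth (a := 2) (b := 2) (a' := 0) (b' := 0) (by decide) (by rw [HL22, (hL0 0)]) (h.trans (hM0 0).symm), fun h => horth (a := 2) (b := 2) (a' := 1) (b' := 1) (by decide) (by rw [HL22, HL11]) (h.trans HM11.symm), fun h => horth (a := 2) (b := 3) (a' := 0) (b' := 1) (by decide) (by rw [HL23, (hL0 1)]) (h.trans (hM0 1).symm),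 fun h => horth (a := 2) (b := 3) (a' := 1) (b' := 0) (by decide) (by rw [HL23, (hLa0 1)]) (h.trans HM10.symm)⟩ with ⟨HM20, HM21, HM22, HM23⟩
          ·
            rcases (by decide : ∀ y0 y1 y2 y3 : Fin 4, (y0 ≠ y1 ∧ y0 ≠ y2 ∧ y0 ≠ y3 ∧ y1 ≠ y2 ∧ y1 ≠ y3 ∧ y2 ≠ y3 ∧ y0 ≠ 0 ∧ y0 ≠ 3 ∧ y0 ≠ 1 ∧ y1 ≠ 1 ∧ y1 ≠ 2 ∧ y1 ≠ 0 ∧ y2 ≠ 2 ∧ y2 ≠ 1 ∧ y2 ≠ 3 ∧ y3 ≠ 3 ∧ y3 ≠ 0 ∧ y3 ≠ 2 ∧ y0 ≠ 3 ∧ y0 ≠ 1 ∧ y0 ≠ 0 ∧ y1 ≠ 2 ∧ y1 ≠ 0 ∧ y1 ≠ 1 ∧ y2 ≠ 1 ∧ y2 ≠ 3 ∧ y2 ≠ 2 ∧ y3 ≠ 0 ∧ y3 ≠ 2 ∧ y3 ≠ 3) → ((y0 = 2 ∧ y1 = 3 ∧ y2 = 0 ∧ y3 = 1))) (M 3 0)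 (M 3 1) (M 3 2) (M 3 3) ⟨hMrne 3 (by decide), hMrne 3 (by decide), hMrne 3 (by decide), hMrne 3 (by decide), hMrne 3 (by decide), hMrne 3 (by decide), fun h => hMcne 0 (by decide) (h.trans (hM0 0).symm), fun h => hMcne 0 (by decide) (h.trans HM10.symm), fun h => hMcne 0 (by decide) (h.trans HM20.symm), fun h => hMcne 1 (by decide) (h.trans (hM0 1).symm), fun h => hMcne 1 (by decide) (h.trans HM11.symm), fun h => hMcne 1 (by decide) (h.trans HM21.symm), fun h => hMcne 2 (by decide) (h.trans (hM0 2).symm), fun h => hMcne 2 (by decide) (h.trans HM12.symm), fun h => hMcne 2 (by decide) (h.trans HM22.symm), fun h => hMcne 3 (by decide) (h.trans (hM0 3).symm), fun h => hMcne 3 (by decide) (h.trans HM13.symm), fun h => hMcne 3 (by decide) (h.trans HM23.symm), fun h => horth (a := 3) (b := 0) (a' := 0) (b' := 3) (by decide) (by rw [(hLa0 3), (hL0 3)]) (h.trans (hM0 3).symm), fun h => horth (a := 3) (b := 0) (a' := 1) (b' := 2) (by decide) (by rw [(hLa0 3), HL12]) (h.trans HM12.symm), fun h => horth (a := 3) (b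 := 0) (a' := 2) (b' := 1) (by decide) (by rw [(hLa0 3), HL21]) (h.trans HM21.symm), fun h => horth (a := 3) (b := 1) (a' := 0) (b' := 2) (by decide) (by rw [HL31, (hL0 2)]) (h.trans (hM0 2).symm), fun h => horth (a := 3) (b := 1) (a' := 1) (b' := 3) (by decide) (by rw [HL31, HL13]) (h.trans HM13.symm), fun h => horth (a := 3) (b := 1) (a' := 2) (b' := 0) (by decide) (by rw [HL31, (hLa0 2)]) (h.trans HM20.symm), fun h => horth (a := 3) (b := 2) (a' := 0) (b' := 1) (by decide) (by rw [HL32, (hL0 1)]) (h.trans (hM0 1).symm), fun h => horth (a := 3) (b := 2) (a' := 1) (b' := 0) (by decide) (by rw [HL32, (hLa0 1)]) (h.trans HM10.symm), fun h => horth (a := 3) (b := 2) (a' := 2) (b' := 3) (by decide) (by rw [HL32, HL23]) (h.trans HM23.symm), fun h => horth (a := 3) (b := 3) (a' := 0) (b' := 0) (by decide) (by rw [HL33, (hL0 0)]) (h.trans (hM0 0).symm), fun h => horth (a := 3) (b := 3) (a' := 1) (b' := 1) (by decide) (by rw [HL33, HL11]) (h.trans HM11.symm), fun h => horth (a := 3)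 (b := 3) (a' := 2) (b' := 2) (by decide) (by rw [HL33, HL22]) (h.trans HM22.symm)⟩ with ⟨HM30, HM31, HM32, HM33⟩
            ·
              refine ⟨?_, Or.inr ?_⟩
              · exact allFin4 (allFin4 (by rw [(hL0 0)]; decide) (by rw [(hL0 1)]; decide) (by rw [(hL0 2)]; decide) (by rw [(hL0 3)]; decide)) (allFin4 (by rw [(hLa0 1)]; decide) (by rw [HL11]; decide) (by rw [HL12]; decide) (by rw [HL13]; decide)) (allFin4 (by rw [(hLa0 2)]; decide) (by rw [HL21]; decide) (by rw [HL22]; decide) (by rw [HL23]; decide)) (allFin4 (by rw [(hLa0 3)]; decide) (by rw [HL31]; decide) (by rw [HL32]; decide) (by rw [HL33]; decide))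
              · exact allFin4 (allFin4 (by rw [(hM0 0)]; decide) (by rw [(hM0 1)]; decide) (by rw [(hM0 2)]; decide) (by rw [(hM0 3)]; decide)) (allFin4 (by rw [HM10]; decide) (by rw [HM11]; decide) (by rw [HM12]; decide) (by rw [HM13]; decide)) (allFin4 (by rw [HM20]; decide) (by rw [HM21]; decide) (by rw [HM22]; decide) (by rw [HM23]; decide)) (allFin4 (by rw [HM30]; decide) (by rw [HM31]; decide) (by rw [HM32]; decide) (by rw [HM33]; decide))
    ·
      rcases (by decide : ∀ x1 x2 x3 : Fin 4, (x1 ≠ 3 ∧ x2 ≠ 3 ∧ x3 ≠ 3 ∧ x1 ≠ x2 ∧ x1 ≠ x3 ∧ x2 ≠ x3 ∧ x1 ≠ 1 ∧ x1 ≠ 0 ∧ x1 ≠ 3 ∧ x2 ≠ 2 ∧ x2 ≠ 3 ∧ x2 ≠ 1 ∧ x3 ≠ 3 ∧ x3 ≠ 2 ∧ x3 ≠ 0) → ((x1 = 2 ∧ x2 = 0 ∧ x3 = 1))) (L 3 1) (L 3 2) (L 3 3) ⟨fun h => hLrne 3 (by decide) (h.trans (hLa0 3).symm), fun h => hLrne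 3 (by decide) (h.trans (hLa0 3).symm), fun h => hLrne 3 (by decide) (h.trans (hLa0 3).symm), hLrne 3 (by decide), hLrne 3 (by decide), hLrne 3 (by decide), fun h => hLcne 1 (by decide) (h.trans (hL0 1).symm), fun h => hLcne 1 (by decide) (h.trans HL11.symm), fun h => hLcne 1 (by decide) (h.trans HL21.symm), fun h => hLcne 2 (by decide) (h.trans (hL0 2).symm), fun h => hLcne 2 (by decide) (h.trans HL12.symm), fun h => hLcne 2 (by decide) (h.trans HL22.symm), fun h => hLcne 3 (by decide) (h.trans (hL0 3).symm), fun h => hLcne 3 (by decide) (h.trans HL13.symm), fun h => hLcne 3 (by decide) (h.trans HL23.symm)⟩ with ⟨HL31, HL32, HL33⟩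
      ·
        rcases (by decide : ∀ y0 y1 y2 y3 : Fin 4, (y0 ≠ y1 ∧ y0 ≠ y2 ∧ y0 ≠ y3 ∧ y1 ≠ y2 ∧ y1 ≠ y3 ∧ y2 ≠ y3 ∧ y0 ≠ 0 ∧ y1 ≠ 1 ∧ y2 ≠ 2 ∧ y3 ≠ 3 ∧ y0 ≠ 1 ∧ y1 ≠ 0 ∧ y2 ≠ 3 ∧ y3 ≠ 2) → ((y0 = 2 ∧ y1 = 3 ∧ y2 = 0 ∧ y3 = 1) ∨ (y0 = 2 ∧ y1 = 3 ∧ y2 = 1 ∧ y3 = 0) ∨ (y0 = 3 ∧ y1 = 2 ∧ y2 = 0 ∧ y3 = 1) ∨ (y0 = 3 ∧ y1 = 2 ∧ y2 = 1 ∧ y3 = 0))) (M 1 0) (M 1 1) (M 1 2) (M 1 3) ⟨hMrne 1 (by decide), hMrne 1 (by decide), hMrne 1 (by decide), hMrne 1 (by decide), hMrne 1 (by decide), hMrne 1 (by decide), fun h => hMcne 0 (by decide) (h.trans (hM0 0).symm), fun h => hMcne 1 (by decide) (h.trans (hM0 1).symm), fun h => hMcne 2 (by decide) (h.trans (hM0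 2).symm), fun h => hMcne 3 (by decide) (h.trans (hM0 3).symm), fun h => horth (a := 1) (b := 0) (a' := 0) (b' := 1) (by decide) (by rw [(hLa0 1), (hL0 1)]) (h.trans (hM0 1).symm), fun h => horth (a := 1) (b := 1) (a' := 0) (b' := 0) (by decide) (by rw [HL11, (hL0 0)]) (h.trans (hM0 0).symm), fun h => horth (a := 1) (b := 2) (a' := 0) (b' := 3) (by decide) (by rw [HL12, (hL0 3)]) (h.trans (hM0 3).symm), fun h => horth (a := 1) (b := 3) (a' := 0) (b' := 2) (by decide) (by rw [HL13, (hL0 2)]) (h.trans (hM0 2).symm)⟩ with ⟨HM10, HM11, HM12, HM13⟩ | ⟨HM10, HM11, HM12, HM13⟩ | ⟨HM10, HM11, HM12, HM13⟩ | ⟨HM10, HM11, HM12, HM13⟩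
        ·
          exact ((by decide : ∀ y0 y1 y2 y3 : Fin 4, (y0 ≠ y1 ∧ y0 ≠ y2 ∧ y0 ≠ y3 ∧ y1 ≠ y2 ∧ y1 ≠ y3 ∧ y2 ≠ y3 ∧ y0 ≠ 0 ∧ y0 ≠ 2 ∧ y1 ≠ 1 ∧ y1 ≠ 3 ∧ y2 ≠ 2 ∧ y2 ≠ 0 ∧ y3 ≠ 3 ∧ y3 ≠ 1 ∧ y0 ≠ 2 ∧ y0 ≠ 1 ∧ y1 ≠ 3 ∧ y1 ≠ 0 ∧ y2 ≠ 1 ∧ y2 ≠ 2 ∧ y3 ≠ 0 ∧ y3 ≠ 3) → (False)) (M 2 0) (M 2 1) (M 2 2) (M 2 3) ⟨hMrne 2 (by decide), hMrne 2 (by decide), hMrne 2 (by decide), hMrne 2 (by decide), hMrne 2 (by decide), hMrne 2 (by decide), fun h => hMcne 0 (by decide) (h.trans (hM0 0).symm), fun h => hMcne 0 (by decide) (h.trans HM10.symm), fun h => hMcne 1 (by decide) (h.trans (hM0 1).symm), fun h => hMcne 1 (by decide) (h.trans HM11.symm), fun h => hMcne 2 (by decide) (h.trans (hM0 2).symm),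 fun h => hMcne 2 (by decide) (h.trans HM12.symm), fun h => hMcne 3 (by decide) (h.trans (hM0 3).symm), fun h => hMcne 3 (by decide) (h.trans HM13.symm), fun h => horth (a := 2) (b := 0) (a' := 0) (b' := 2) (by decide) (by rw [(hLa0 2), (hL0 2)]) (h.trans (hM0 2).symm), fun h => horth (a := 2) (b := 0) (a' := 1) (b' := 3) (by decide) (by rw [(hLa0 2), HL13]) (h.trans HM13.symm), fun h => horth (a := 2) (b := 1) (a' := 0) (b' := 3) (by decide) (by rw [HL21, (hL0 3)]) (h.trans (hM0 3).symm), fun h => horth (a := 2) (b := 1) (a' := 1) (b' := 2) (by decide) (by rw [HL21, HL12]) (h.trans HM12.symm), fun h => horth (a := 2) (b := 2) (a' := 0) (b' := 1) (by decide) (by rw [HL22, (hL0 1)]) (h.trans (hM0 1).symm), fun h => horth (a := 2) (b := 2) (a' := 1) (b' := 0) (by decide) (by rw [HL22, (hLa0 1)]) (h.trans HM10.symm), fun h => horth (a := 2) (b := 3) (a' := 0) (b' := 0) (by decide) (by rw [HL23, (hL0 0)]) (h.trans (hM0 0).symm), fun h => horth (a := 2) (b := 3) (a' := 1) (b' :=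 1) (by decide) (by rw [HL23, HL11]) (h.trans HM11.symm)⟩).elim
        ·
          rcases (by decide : ∀ y0 y1 y2 y3 : Fin 4, (y0 ≠ y1 ∧ y0 ≠ y2 ∧ y0 ≠ y3 ∧ y1 ≠ y2 ∧ y1 ≠ y3 ∧ y2 ≠ y3 ∧ y0 ≠ 0 ∧ y0 ≠ 2 ∧ y1 ≠ 1 ∧ y1 ≠ 3 ∧ y2 ≠ 2 ∧ y2 ≠ 1 ∧ y3 ≠ 3 ∧ y3 ≠ 0 ∧ y0 ≠ 2 ∧ y0 ≠ 0 ∧ y1 ≠ 3 ∧ y1 ≠ 1 ∧ y2 ≠ 1 ∧ y2 ≠ 2 ∧ y3 ≠ 0 ∧ y3 ≠ 3) → ((y0 = 1 ∧ y1 = 0 ∧ y2 = 3 ∧ y3 = 2) ∨ (y0 = 3 ∧ y1 = 2 ∧ y2 = 0 ∧ y3 = 1))) (M 2 0) (M 2 1) (M 2 2) (M 2 3) ⟨hMrne 2 (by decide), hMrne 2 (by decide), hMrne 2 (by decide), hMrne 2 (by decide), hMrne 2 (by decide), hMrne 2 (by decide), fun h => hMcne 0 (by decide) (h.trans (hM0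 0).symm), fun h => hMcne 0 (by decide) (h.trans HM10.symm), fun h => hMcne 1 (by decide) (h.trans (hM0 1).symm), fun h => hMcne 1 (by decide) (h.trans HM11.symm), fun h => hMcne 2 (by decide) (h.trans (hM0 2).symm), fun h => hMcne 2 (by decide) (h.trans HM12.symm), fun h => hMcne 3 (by decide) (h.trans (hM0 3).symm), fun h => hMcne 3 (by decide) (h.trans HM13.symm), fun h => horth (a := 2) (b := 0) (a' := 0) (b' := 2) (by decide) (by rw [(hLa0 2), (hL0 2)]) (h.trans (hM0 2).symm), fun h => horth (a := 2) (b := 0) (a' := 1) (b' := 3) (by decide) (by rw [(hLa0 2), HL13]) (h.trans HM13.symm), fun h => horth (a := 2) (b := 1) (a' := 0) (b' := 3) (by decide) (by rw [HL21, (hL0 3)]) (h.trans (hM0 3).symm), fun h => horth (a := 2) (b := 1) (a' := 1) (b' := 2) (by decide) (by rw [HL21, HL12]) (h.trans HM12.symm), fun h => horth (a := 2) (b := 2) (a' := 0) (b' := 1) (by decide) (by rw [HL22, (hL0 1)]) (h.trans (hM0 1).symm), fun h => horth (a := 2) (b := 2) (a' := 1) (b' := 0) (by decide) (by rw [HL22,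 (hLa0 1)]) (h.trans HM10.symm), fun h => horth (a := 2) (b := 3) (a' := 0) (b' := 0) (by decide) (by rw [HL23, (hL0 0)]) (h.trans (hM0 0).symm), fun h => horth (a := 2) (b := 3) (a' := 1) (b' := 1) (by decide) (by rw [HL23, HL11]) (h.trans HM11.symm)⟩ with ⟨HM20, HM21, HM22, HM23⟩ | ⟨HM20, HM21, HM22, HM23⟩
          ·
            exact ((by decide : ∀ y0 y1 y2 y3 : Fin 4, (y0 ≠ y1 ∧ y0 ≠ y2 ∧ y0 ≠ y3 ∧ y1 ≠ y2 ∧ y1 ≠ y3 ∧ y2 ≠ y3 ∧ y0 ≠ 0 ∧ y0 ≠ 2 ∧ y0 ≠ 1 ∧ y1 ≠ 1 ∧ y1 ≠ 3 ∧ y1 ≠ 0 ∧ y2 ≠ 2 ∧ y2 ≠ 1 ∧ y2 ≠ 3 ∧ y3 ≠ 3 ∧ y3 ≠ 0 ∧ y3 ≠ 2 ∧ y0 ≠ 3 ∧ y0 ≠ 1 ∧ y0 ≠ 0 ∧ y1 ≠ 2 ∧ y1 ≠ 0 ∧ y1 ≠ 1 ∧ y2 ≠ 0 ∧ y2 ≠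 3 ∧ y2 ≠ 2 ∧ y3 ≠ 1 ∧ y3 ≠ 2 ∧ y3 ≠ 3) → (False)) (M 3 0) (M 3 1) (M 3 2) (M 3 3) ⟨hMrne 3 (by decide), hMrne 3 (by decide), hMrne 3 (by decide), hMrne 3 (by decide), hMrne 3 (by decide), hMrne 3 (by decide), fun h => hMcne 0 (by decide) (h.trans (hM0 0).symm), fun h => hMcne 0 (by decide) (h.trans HM10.symm), fun h => hMcne 0 (by decide) (h.trans HM20.symm), fun h => hMcne 1 (by decide) (h.trans (hM0 1).symm), fun h => hMcne 1 (by decide) (h.trans HM11.symm), fun h => hMcne 1 (by decide) (h.trans HM21.symm), fun h => hMcne 2 (by decide) (h.trans (hM0 2).symm), fun h => hMcne 2 (by decide) (h.trans HM12.symm), fun h => hMcne 2 (by decide) (h.trans HM22.symm), fun h => hMcne 3 (by decide) (h.trans (hM0 3).symm), fun h => hMcne 3 (by decide) (h.trans HM13.symm), fun h => hMcne 3 (by decide) (h.trans HM23.symm), fun h => horth (a := 3) (b := 0) (a' := 0) (b' := 3) (by decide) (by rw [(hLa0 3), (hL0 3)]) (h.trans (hM0 3).symm), fun h => horth (a :=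 3) (b := 0) (a' := 1) (b' := 2) (by decide) (by rw [(hLa0 3), HL12]) (h.trans HM12.symm), fun h => horth (a := 3) (b := 0) (a' := 2) (b' := 1) (by decide) (by rw [(hLa0 3), HL21]) (h.trans HM21.symm), fun h => horth (a := 3) (b := 1) (a' := 0) (b' := 2) (by decide) (by rw [HL31, (hL0 2)]) (h.trans (hM0 2).symm), fun h => horth (a := 3) (b := 1) (a' := 1) (b' := 3) (by decide) (by rw [HL31, HL13]) (h.trans HM13.symm), fun h => horth (a := 3) (b := 1) (a' := 2) (b' := 0) (by decide) (by rw [HL31, (hLa0 2)]) (h.trans HM20.symm), fun h => horth (a := 3) (b := 2) (a' := 0) (b' := 0) (by decide) (by rw [HL32, (hL0 0)]) (h.trans (hM0 0).symm), fun h => horth (a := 3) (b := 2) (a' := 1) (b' := 1) (by decide) (by rw [HL32, HL11]) (h.trans HM11.symm), fun h => horth (a := 3) (b := 2) (a' := 2) (b' := 3) (by decide) (by rw [HL32, HL23]) (h.trans HM23.symm), fun h => horth (a := 3) (b := 3) (a' := 0) (b' := 1) (by decide) (by rw [HL33, (hL0 1)]) (h.trans (hM0 1).symm), fun h => horth (a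 := 3) (b := 3) (a' := 1) (b' := 0) (by decide) (by rw [HL33, (hLa0 1)]) (h.trans HM10.symm), fun h => horth (a := 3) (b := 3) (a' := 2) (b' := 2) (by decide) (by rw [HL33, HL22]) (h.trans HM22.symm)⟩).elim
          ·
            exact ((by decide : ∀ y0 y1 y2 y3 : Fin 4, (y0 ≠ y1 ∧ y0 ≠ y2 ∧ y0 ≠ y3 ∧ y1 ≠ y2 ∧ y1 ≠ y3 ∧ y2 ≠ y3 ∧ y0 ≠ 0 ∧ y0 ≠ 2 ∧ y0 ≠ 3 ∧ y1 ≠ 1 ∧ y1 ≠ 3 ∧ y1 ≠ 2 ∧ y2 ≠ 2 ∧ y2 ≠ 1 ∧ y2 ≠ 0 ∧ y3 ≠ 3 ∧ y3 ≠ 0 ∧ y3 ≠ 1 ∧ y0 ≠ 3 ∧ y0 ≠ 1 ∧ y0 ≠ 2 ∧ y1 ≠ 2 ∧ y1 ≠ 0 ∧ y1 ≠ 3 ∧ y2 ≠ 0 ∧ y2 ≠ 3 ∧ y2 ≠ 1 ∧ y3 ≠ 1 ∧ y3 ≠ 2 ∧ y3 ≠ 0) → (False)) (M 3 0) (M 3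 1) (M 3 2) (M 3 3) ⟨hMrne 3 (by decide), hMrne 3 (by decide), hMrne 3 (by decide), hMrne 3 (by decide), hMrne 3 (by decide), hMrne 3 (by decide), fun h => hMcne 0 (by decide) (h.trans (hM0 0).symm), fun h => hMcne 0 (by decide) (h.trans HM10.symm), fun h => hMcne 0 (by decide) (h.trans HM20.symm), fun h => hMcne 1 (by decide) (h.trans (hM0 1).symm), fun h => hMcne 1 (by decide) (h.trans HM11.symm), fun h => hMcne 1 (by decide) (h.trans HM21.symm), fun h => hMcne 2 (by decide) (h.trans (hM0 2).symm), fun h => hMcne 2 (by decide) (h.trans HM12.symm), fun h => hMcne 2 (by decide) (h.trans HM22.symm), fun h => hMcne 3 (by decide) (h.trans (hM0 3).symm), fun h => hMcne 3 (by decide) (h.trans HM13.symm), fun h => hMcne 3 (by decide) (h.trans HM23.symm), fun h => horth (a := 3) (b := 0) (a' := 0) (b' := 3) (by decide) (by rw [(hLa0 3), (hL0 3)]) (h.trans (hM0 3).symm), fun h => horth (a := 3) (b := 0) (a' := 1) (b' := 2) (by decide) (by rw [(hLa0 3), HL12]) (h.trans HM12.symm), fun h => horth (a := 3) (b := 0)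 (a' := 2) (b' := 1) (by decide) (by rw [(hLa0 3), HL21]) (h.trans HM21.symm), fun h => horth (a := 3) (b := 1) (a' := 0) (b' := 2) (by decide) (by rw [HL31, (hL0 2)]) (h.trans (hM0 2).symm), fun h => horth (a := 3) (b := 1) (a' := 1) (b' := 3) (by decide) (by rw [HL31, HL13]) (h.trans HM13.symm), fun h => horth (a := 3) (b := 1) (a' := 2) (b' := 0) (by decide) (by rw [HL31, (hLa0 2)]) (h.trans HM20.symm), fun h => horth (a := 3) (b := 2) (a' := 0) (b' := 0) (by decide) (by rw [HL32, (hL0 0)]) (h.trans (hM0 0).symm), fun h => horth (a := 3) (b := 2) (a' := 1) (b' := 1) (by decide) (by rw [HL32, HL11]) (h.trans HM11.symm), fun h => horth (a := 3) (b := 2) (a' := 2) (b' := 3) (by decide) (by rw [HL32, HL23]) (h.trans HM23.symm), fun h => horth (a := 3) (b := 3) (a' := 0) (b' := 1) (by decide) (by rw [HL33, (hL0 1)]) (h.trans (hM0 1).symm), fun h => horth (a := 3) (b := 3) (a' := 1) (b' := 0) (by decide) (by rw [HL33, (hLa0 1)]) (h.trans HM10.symm), fun h => horth (a := 3) (b :=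 3) (a' := 2) (b' := 2) (by decide) (by rw [HL33, HL22]) (h.trans HM22.symm)⟩).elim
        ·
          exact ((by decide : ∀ y0 y1 y2 y3 : Fin 4, (y0 ≠ y1 ∧ y0 ≠ y2 ∧ y0 ≠ y3 ∧ y1 ≠ y2 ∧ y1 ≠ y3 ∧ y2 ≠ y3 ∧ y0 ≠ 0 ∧ y0 ≠ 3 ∧ y1 ≠ 1 ∧ y1 ≠ 2 ∧ y2 ≠ 2 ∧ y2 ≠ 0 ∧ y3 ≠ 3 ∧ y3 ≠ 1 ∧ y0 ≠ 2 ∧ y0 ≠ 1 ∧ y1 ≠ 3 ∧ y1 ≠ 0 ∧ y2 ≠ 1 ∧ y2 ≠ 3 ∧ y3 ≠ 0 ∧ y3 ≠ 2) → (False)) (M 2 0) (M 2 1) (M 2 2) (M 2 3) ⟨hMrne 2 (by decide), hMrne 2 (by decide), hMrne 2 (by decide), hMrne 2 (by decide), hMrne 2 (by decide), hMrne 2 (by decide), fun h => hMcne 0 (by decide) (h.trans (hM0 0).symm), fun h => hMcne 0 (by decide) (h.trans HM10.symm), fun h => hMcne 1 (by decide) (h.trans (hM0 1).symm), fun h =>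 hMcne 1 (by decide) (h.trans HM11.symm), fun h => hMcne 2 (by decide) (h.trans (hM0 2).symm), fun h => hMcne 2 (by decide) (h.trans HM12.symm), fun h => hMcne 3 (by decide) (h.trans (hM0 3).symm), fun h => hMcne 3 (by decide) (h.trans HM13.symm), fun h => horth (a := 2) (b := 0) (a' := 0) (b' := 2) (by decide) (by rw [(hLa0 2), (hL0 2)]) (h.trans (hM0 2).symm), fun h => horth (a := 2) (b := 0) (a' := 1) (b' := 3) (by decide) (by rw [(hLa0 2), HL13]) (h.trans HM13.symm), fun h => horth (a := 2) (b := 1) (a' := 0) (b' := 3) (by decide) (by rw [HL21, (hL0 3)]) (h.trans (hM0 3).symm), fun h => horth (a := 2) (b := 1) (a' := 1) (b' := 2) (by decide) (by rw [HL21, HL12]) (h.trans HM12.symm), fun h => horth (a := 2) (b := 2) (a' := 0) (b' := 1) (by decide) (by rw [HL22, (hL0 1)]) (h.trans (hM0 1).symm), fun h => horth (a := 2) (b := 2) (a' := 1) (b' := 0) (by decide) (by rw [HL22, (hLa0 1)]) (h.trans HM10.symm), fun h => horth (a := 2) (b := 3) (a' := 0) (b' := 0) (by decide) (by rw [HL23,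 (hL0 0)]) (h.trans (hM0 0).symm), fun h => horth (a := 2) (b := 3) (a' := 1) (b' := 1) (by decide) (by rw [HL23, HL11]) (h.trans HM11.symm)⟩).elim
        ·
          exact ((by decide : ∀ y0 y1 y2 y3 : Fin 4, (y0 ≠ y1 ∧ y0 ≠ y2 ∧ y0 ≠ y3 ∧ y1 ≠ y2 ∧ y1 ≠ y3 ∧ y2 ≠ y3 ∧ y0 ≠ 0 ∧ y0 ≠ 3 ∧ y1 ≠ 1 ∧ y1 ≠ 2 ∧ y2 ≠ 2 ∧ y2 ≠ 1 ∧ y3 ≠ 3 ∧ y3 ≠ 0 ∧ y0 ≠ 2 ∧ y0 ≠ 0 ∧ y1 ≠ 3 ∧ y1 ≠ 1 ∧ y2 ≠ 1 ∧ y2 ≠ 3 ∧ y3 ≠ 0 ∧ y3 ≠ 2) → (False)) (M 2 0) (M 2 1) (M 2 2) (M 2 3) ⟨hMrne 2 (by decide), hMrne 2 (by decide), hMrne 2 (by decide), hMrne 2 (by decide), hMrne 2 (by decide), hMrne 2 (by decide), fun h => hMcne 0 (by decide) (h.trans (hM0 0).symm), fun h => hMcne 0 (by decide) (h.trans HM10.symm),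 fun h => hMcne 1 (by decide) (h.trans (hM0 1).symm), fun h => hMcne 1 (by decide) (h.trans HM11.symm), fun h => hMcne 2 (by decide) (h.trans (hM0 2).symm), fun h => hMcne 2 (by decide) (h.trans HM12.symm), fun h => hMcne 3 (by decide) (h.trans (hM0 3).symm), fun h => hMcne 3 (by decide) (h.trans HM13.symm), fun h => horth (a := 2) (b := 0) (a' := 0) (b' := 2) (by decide) (by rw [(hLa0 2), (hL0 2)]) (h.trans (hM0 2).symm), fun h => horth (a := 2) (b := 0) (a' := 1) (b' := 3) (by decide) (by rw [(hLa0 2), HL13]) (h.trans HM13.symm), fun h => horth (a := 2) (b := 1) (a' := 0) (b' := 3) (by decide) (by rw [HL21, (hL0 3)]) (h.trans (hM0 3).symm), fun h => horth (a := 2) (b := 1) (a' := 1) (b' := 2) (by decide) (by rw [HL21, HL12]) (h.trans HM12.symm), fun h => horth (a := 2) (b := 2) (a' := 0) (b' := 1) (by decide) (by rw [HL22, (hL0 1)]) (h.trans (hM0 1).symm), fun h => horth (a := 2) (b := 2) (a' := 1) (b' := 0) (by decide) (by rw [HL22, (hLa0 1)]) (h.trans HM10.symm), fun h => horth (a :=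 2) (b := 3) (a' := 0) (b' := 0) (by decide) (by rw [HL23, (hL0 0)]) (h.trans (hM0 0).symm), fun h => horth (a := 2) (b := 3) (a' := 1) (b' := 1) (by decide) (by rw [HL23, HL11]) (h.trans HM11.symm)⟩).elim
  ·
    rcases (by decide : ∀ x1 x2 x3 : Fin 4, (x1 ≠ 2 ∧ x2 ≠ 2 ∧ x3 ≠ 2 ∧ x1 ≠ x2 ∧ x1 ≠ x3 ∧ x2 ≠ x3 ∧ x1 ≠ 1 ∧ x1 ≠ 2 ∧ x2 ≠ 2 ∧ x2 ≠ 3 ∧ x3 ≠ 3 ∧ x3 ≠ 0) → ((x1 = 3 ∧ x2 = 0 ∧ x3 = 1))) (L 2 1) (L 2 2) (L 2 3) ⟨fun h => hLrne 2 (by decide) (h.trans (hLa0 2).symm), fun h => hLrne 2 (by decide) (h.trans (hLa0 2).symm), fun h => hLrne 2 (by decide) (h.trans (hLa0 2).symm), hLrne 2 (by decide), hLrne 2 (by decide), hLrne 2 (by decide), fun h => hLcne 1 (by decide) (h.trans (hL0 1).symm), fun h => hLcne 1 (by decide) (h.trans HL11.symm), fun h => hLcne 2 (by decide) (h.trans (hL0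 2).symm), fun h => hLcne 2 (by decide) (h.trans HL12.symm), fun h => hLcne 3 (by decide) (h.trans (hL0 3).symm), fun h => hLcne 3 (by decide) (h.trans HL13.symm)⟩ with ⟨HL21, HL22, HL23⟩
    ·
      rcases (by decide : ∀ x1 x2 x3 : Fin 4, (x1 ≠ 3 ∧ x2 ≠ 3 ∧ x3 ≠ 3 ∧ x1 ≠ x2 ∧ x1 ≠ x3 ∧ x2 ≠ x3 ∧ x1 ≠ 1 ∧ x1 ≠ 2 ∧ x1 ≠ 3 ∧ x2 ≠ 2 ∧ x2 ≠ 3 ∧ x2 ≠ 0 ∧ x3 ≠ 3 ∧ x3 ≠ 0 ∧ x3 ≠ 1) → ((x1 = 0 ∧ x2 = 1 ∧ x3 = 2))) (L 3 1) (L 3 2) (L 3 3) ⟨fun h => hLrne 3 (by decide) (h.trans (hLa0 3).symm), fun h => hLrne 3 (by decide) (h.trans (hLa0 3).symm), fun h => hLrne 3 (by decide) (h.trans (hLa0 3).symm), hLrne 3 (by decide), hLrne 3 (by decide), hLrne 3 (by decide), fun h => hLcne 1 (by decide) (h.trans (hL0 1).symm), fun h => hLcne 1 (by decide) (h.trans HL11.symm),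 fun h => hLcne 1 (by decide) (h.trans HL21.symm), fun h => hLcne 2 (by decide) (h.trans (hL0 2).symm), fun h => hLcne 2 (by decide) (h.trans HL12.symm), fun h => hLcne 2 (by decide) (h.trans HL22.symm), fun h => hLcne 3 (by decide) (h.trans (hL0 3).symm), fun h => hLcne 3 (by decide) (h.trans HL13.symm), fun h => hLcne 3 (by decide) (h.trans HL23.symm)⟩ with ⟨HL31, HL32, HL33⟩
      ·
        rcases (by decide : ∀ y0 y1 y2 y3 : Fin 4, (y0 ≠ y1 ∧ y0 ≠ y2 ∧ y0 ≠ y3 ∧ y1 ≠ y2 ∧ y1 ≠ y3 ∧ y2 ≠ y3 ∧ y0 ≠ 0 ∧ y1 ≠ 1 ∧ y2 ≠ 2 ∧ y3 ≠ 3 ∧ y0 ≠ 1 ∧ y1 ≠ 2 ∧ y2 ≠ 3 ∧ y3 ≠ 0) → ((y0 = 2 ∧ y1 = 3 ∧ y2 = 0 ∧ y3 = 1) ∨ (y0 = 3 ∧ y1 = 0 ∧ y2 = 1 ∧ y3 = 2))) (M 1 0) (M 1 1) (M 1 2) (M 1 3) ⟨hMrne 1 (by decide), hMrne 1 (by decide),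 hMrne 1 (by decide), hMrne 1 (by decide), hMrne 1 (by decide), hMrne 1 (by decide), fun h => hMcne 0 (by decide) (h.trans (hM0 0).symm), fun h => hMcne 1 (by decide) (h.trans (hM0 1).symm), fun h => hMcne 2 (by decide) (h.trans (hM0 2).symm), fun h => hMcne 3 (by decide) (h.trans (hM0 3).symm), fun h => horth (a := 1) (b := 0) (a' := 0) (b' := 1) (by decide) (by rw [(hLa0 1), (hL0 1)]) (h.trans (hM0 1).symm), fun h => horth (a := 1) (b := 1) (a' := 0) (b' := 2) (by decide) (by rw [HL11, (hL0 2)]) (h.trans (hM0 2).symm), fun h => horth (a := 1) (b := 2) (a' := 0) (b' := 3) (by decide) (by rw [HL12, (hL0 3)]) (h.trans (hM0 3).symm), fun h => horth (a := 1) (b := 3) (a' := 0) (b' := 0) (by decide) (by rw [HL13, (hL0 0)]) (h.trans (hM0 0).symm)⟩ with ⟨HM10, HM11, HM12, HM13⟩ | ⟨HM10, HM11, HM12, HM13⟩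
        ·
          rcases (by decide : ∀ y0 y1 y2 y3 : Fin 4, (y0 ≠ y1 ∧ y0 ≠ y2 ∧ y0 ≠ y3 ∧ y1 ≠ y2 ∧ y1 ≠ y3 ∧ y2 ≠ y3 ∧ y0 ≠ 0 ∧ y0 ≠ 2 ∧ y1 ≠ 1 ∧ y1 ≠ 3 ∧ y2 ≠ 2 ∧ y2 ≠ 0 ∧ y3 ≠ 3 ∧ y3 ≠ 1 ∧ y0 ≠ 2 ∧ y0 ≠ 3 ∧ y1 ≠ 3 ∧ y1 ≠ 0 ∧ y2 ≠ 0 ∧ y2 ≠ 1 ∧ y3 ≠ 1 ∧ y3 ≠ 2) → ((y0 = 1 ∧ y1 = 2 ∧ y2 = 3 ∧ y3 = 0))) (M 2 0) (M 2 1) (M 2 2) (M 2 3) ⟨hMrne 2 (by decide), hMrne 2 (by decide), hMrne 2 (by decide), hMrne 2 (by decide), hMrne 2 (by decide), hMrne 2 (by decide), fun h => hMcne 0 (by decide) (h.trans (hM0 0).symm), fun h => hMcne 0 (by decide) (h.trans HM10.symm), fun h => hMcne 1 (by decide) (h.trans (hM0 1).symm), fun h => hMcne 1 (by decide) (h.trans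 HM11.symm), fun h => hMcne 2 (by decide) (h.trans (hM0 2).symm), fun h => hMcne 2 (by decide) (h.trans HM12.symm), fun h => hMcne 3 (by decide) (h.trans (hM0 3).symm), fun h => hMcne 3 (by decide) (h.trans HM13.symm), fun h => horth (a := 2) (b := 0) (a' := 0) (b' := 2) (by decide) (by rw [(hLa0 2), (hL0 2)]) (h.trans (hM0 2).symm), fun h => horth (a := 2) (b := 0) (a' := 1) (b' := 1) (by decide) (by rw [(hLa0 2), HL11]) (h.trans HM11.symm), fun h => horth (a := 2) (b := 1) (a' := 0) (b' := 3) (by decide) (by rw [HL21, (hL0 3)]) (h.trans (hM0 3).symm), fun h => horth (a := 2) (b := 1) (a' := 1) (b' := 2) (by decide) (by rw [HL21, HL12]) (h.trans HM12.symm), fun h => horth (a := 2) (b := 2) (a' := 0) (b' := 0) (by decide) (by rw [HL22, (hL0 0)]) (h.trans (hM0 0).symm), fun h => horth (a := 2) (b := 2) (a' := 1) (b' := 3) (by decide) (by rw [HL22, HL13]) (h.trans HM13.symm), fun h => horth (a := 2) (b := 3) (a' := 0) (b' := 1) (by decide) (by rw [HL23, (hL0 1)]) (h.trans (hM0 1).symm),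 fun h => horth (a := 2) (b := 3) (a' := 1) (b' := 0) (by decide) (by rw [HL23, (hLa0 1)]) (h.trans HM10.symm)⟩ with ⟨HM20, HM21, HM22, HM23⟩
          ·
            exact ((by decide : ∀ y0 y1 y2 y3 : Fin 4, (y0 ≠ y1 ∧ y0 ≠ y2 ∧ y0 ≠ y3 ∧ y1 ≠ y2 ∧ y1 ≠ y3 ∧ y2 ≠ y3 ∧ y0 ≠ 0 ∧ y0 ≠ 2 ∧ y0 ≠ 1 ∧ y1 ≠ 1 ∧ y1 ≠ 3 ∧ y1 ≠ 2 ∧ y2 ≠ 2 ∧ y2 ≠ 0 ∧ y2 ≠ 3 ∧ y3 ≠ 3 ∧ y3 ≠ 1 ∧ y3 ≠ 0 ∧ y0 ≠ 3 ∧ y0 ≠ 0 ∧ y0 ≠ 2 ∧ y1 ≠ 0 ∧ y1 ≠ 1 ∧ y1 ≠ 3 ∧ y2 ≠ 1 ∧ y2 ≠ 2 ∧ y2 ≠ 0 ∧ y3 ≠ 2 ∧ y3 ≠ 3 ∧ y3 ≠ 1) → (False)) (M 3 0) (M 3 1) (M 3 2) (M 3 3) ⟨hMrne 3 (by decide), hMrne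 3 (by decide), hMrne 3 (by decide), hMrne 3 (by decide), hMrne 3 (by decide), hMrne 3 (by decide), fun h => hMcne 0 (by decide) (h.trans (hM0 0).symm), fun h => hMcne 0 (by decide) (h.trans HM10.symm), fun h => hMcne 0 (by decide) (h.trans HM20.symm), fun h => hMcne 1 (by decide) (h.trans (hM0 1).symm), fun h => hMcne 1 (by decide) (h.trans HM11.symm), fun h => hMcne 1 (by decide) (h.trans HM21.symm), fun h => hMcne 2 (by decide) (h.trans (hM0 2).symm), fun h => hMcne 2 (by decide) (h.trans HM12.symm), fun h => hMcne 2 (by decide) (h.trans HM22.symm), fun h => hMcne 3 (by decide) (h.trans (hM0 3).symm), fun h => hMcne 3 (by decide) (h.trans HM13.symm), fun h => hMcne 3 (by decide) (h.trans HM23.symm), fun h => horth (a := 3) (b := 0) (a' := 0) (b' := 3) (by decide) (by rw [(hLa0 3), (hL0 3)]) (h.trans (hM0 3).symm), fun h => horth (a := 3) (b := 0) (a' := 1) (b' := 2) (by decide) (by rw [(hLa0 3), HL12]) (h.trans HM12.symm), fun h => horth (a := 3) (b := 0) (a' := 2) (b' := 1) (by decide) (by rw [(hLa0 3), HL21]) (h.trans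 HM21.symm), fun h => horth (a := 3) (b := 1) (a' := 0) (b' := 0) (by decide) (by rw [HL31, (hL0 0)]) (h.trans (hM0 0).symm), fun h => horth (a := 3) (b := 1) (a' := 1) (b' := 3) (by decide) (by rw [HL31, HL13]) (h.trans HM13.symm), fun h => horth (a := 3) (b := 1) (a' := 2) (b' := 2) (by decide) (by rw [HL31, HL22]) (h.trans HM22.symm), fun h => horth (a := 3) (b := 2) (a' := 0) (b' := 1) (by decide) (by rw [HL32, (hL0 1)]) (h.trans (hM0 1).symm), fun h => horth (a := 3) (b := 2) (a' := 1) (b' := 0) (by decide) (by rw [HL32, (hLa0 1)]) (h.trans HM10.symm), fun h => horth (a := 3) (b := 2) (a' := 2) (b' := 3) (by decide) (by rw [HL32, HL23]) (h.trans HM23.symm), fun h => horth (a := 3) (b := 3) (a' := 0) (b' := 2) (by decide) (by rw [HL33, (hL0 2)]) (h.trans (hM0 2).symm), fun h => horth (a := 3) (b := 3) (a' := 1) (b' := 1) (by decide) (by rw [HL33, HL11]) (h.trans HM11.symm), fun h => horth (a := 3) (b := 3) (a' := 2) (b' := 0) (by decide) (by rw [HL33, (hLa0 2)]) (h.trans 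HM20.symm)⟩).elim
        ·
          rcases (by decide : ∀ y0 y1 y2 y3 : Fin 4, (y0 ≠ y1 ∧ y0 ≠ y2 ∧ y0 ≠ y3 ∧ y1 ≠ y2 ∧ y1 ≠ y3 ∧ y2 ≠ y3 ∧ y0 ≠ 0 ∧ y0 ≠ 3 ∧ y1 ≠ 1 ∧ y1 ≠ 0 ∧ y2 ≠ 2 ∧ y2 ≠ 1 ∧ y3 ≠ 3 ∧ y3 ≠ 2 ∧ y0 ≠ 2 ∧ y0 ≠ 0 ∧ y1 ≠ 3 ∧ y1 ≠ 1 ∧ y2 ≠ 0 ∧ y2 ≠ 2 ∧ y3 ≠ 1 ∧ y3 ≠ 3) → ((y0 = 1 ∧ y1 = 2 ∧ y2 = 3 ∧ y3 = 0))) (M 2 0) (M 2 1) (M 2 2) (M 2 3) ⟨hMrne 2 (by decide), hMrne 2 (by decide), hMrne 2 (by decide), hMrne 2 (by decide), hMrne 2 (by decide), hMrne 2 (by decide), fun h => hMcne 0 (by decide) (h.trans (hM0 0).symm), fun h => hMcne 0 (by decide) (h.trans HM10.symm), fun h => hMcne 1 (by decide) (h.trans (hM0 1).symm), fun h => hMcne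 1 (by decide) (h.trans HM11.symm), fun h => hMcne 2 (by decide) (h.trans (hM0 2).symm), fun h => hMcne 2 (by decide) (h.trans HM12.symm), fun h => hMcne 3 (by decide) (h.trans (hM0 3).symm), fun h => hMcne 3 (by decide) (h.trans HM13.symm), fun h => horth (a := 2) (b := 0) (a' := 0) (b' := 2) (by decide) (by rw [(hLa0 2), (hL0 2)]) (h.trans (hM0 2).symm), fun h => horth (a := 2) (b := 0) (a' := 1) (b' := 1) (by decide) (by rw [(hLa0 2), HL11]) (h.trans HM11.symm), fun h => horth (a := 2) (b := 1) (a' := 0) (b' := 3) (by decide) (by rw [HL21, (hL0 3)]) (h.trans (hM0 3).symm), fun h => horth (a := 2) (b := 1) (a' := 1) (b' := 2) (by decide) (by rw [HL21, HL12]) (h.trans HM12.symm), fun h => horth (a := 2) (b := 2) (a' := 0) (b' := 0) (by decide) (by rw [HL22, (hL0 0)]) (h.trans (hM0 0).symm), fun h => horth (a := 2) (b := 2) (a' := 1) (b' := 3) (by decide) (by rw [HL22, HL13]) (h.trans HM13.symm), fun h => horth (a := 2) (b := 3) (a' := 0) (b' := 1) (by decide) (by rw [HL23, (hL0 1)]) (h.trans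 (hM0 1).symm), fun h => horth (a := 2) (b := 3) (a' := 1) (b' := 0) (by decide) (by rw [HL23, (hLa0 1)]) (h.trans HM10.symm)⟩ with ⟨HM20, HM21, HM22, HM23⟩
          ·
            exact ((by decide : ∀ y0 y1 y2 y3 : Fin 4, (y0 ≠ y1 ∧ y0 ≠ y2 ∧ y0 ≠ y3 ∧ y1 ≠ y2 ∧ y1 ≠ y3 ∧ y2 ≠ y3 ∧ y0 ≠ 0 ∧ y0 ≠ 3 ∧ y0 ≠ 1 ∧ y1 ≠ 1 ∧ y1 ≠ 0 ∧ y1 ≠ 2 ∧ y2 ≠ 2 ∧ y2 ≠ 1 ∧ y2 ≠ 3 ∧ y3 ≠ 3 ∧ y3 ≠ 2 ∧ y3 ≠ 0 ∧ y0 ≠ 3 ∧ y0 ≠ 1 ∧ y0 ≠ 2 ∧ y1 ≠ 0 ∧ y1 ≠ 2 ∧ y1 ≠ 3 ∧ y2 ≠ 1 ∧ y2 ≠ 3 ∧ y2 ≠ 0 ∧ y3 ≠ 2 ∧ y3 ≠ 0 ∧ y3 ≠ 1) → (False)) (M 3 0) (M 3 1) (M 3 2) (M 3 3) ⟨hMrne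 3 (by decide), hMrne 3 (by decide), hMrne 3 (by decide), hMrne 3 (by decide), hMrne 3 (by decide), hMrne 3 (by decide), fun h => hMcne 0 (by decide) (h.trans (hM0 0).symm), fun h => hMcne 0 (by decide) (h.trans HM10.symm), fun h => hMcne 0 (by decide) (h.trans HM20.symm), fun h => hMcne 1 (by decide) (h.trans (hM0 1).symm), fun h => hMcne 1 (by decide) (h.trans HM11.symm), fun h => hMcne 1 (by decide) (h.trans HM21.symm), fun h => hMcne 2 (by decide) (h.trans (hM0 2).symm), fun h => hMcne 2 (by decide) (h.trans HM12.symm), fun h => hMcne 2 (by decide) (h.trans HM22.symm), fun h => hMcne 3 (by decide) (h.trans (hM0 3).symm), fun h => hMcne 3 (by decide) (h.trans HM13.symm), fun h => hMcne 3 (by decide) (h.trans HM23.symm), fun h => horth (a := 3) (b := 0) (a' := 0) (b' := 3) (by decide) (by rw [(hLa0 3), (hL0 3)]) (h.trans (hM0 3).symm), fun h => horth (a := 3) (b := 0) (a' := 1) (b' := 2) (by decide) (by rw [(hLa0 3), HL12]) (h.trans HM12.symm), fun h => horth (a := 3) (b := 0) (a' := 2) (b' := 1) (by decide) (by rw [(hLa0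 3), HL21]) (h.trans HM21.symm), fun h => horth (a := 3) (b := 1) (a' := 0) (b' := 0) (by decide) (by rw [HL31, (hL0 0)]) (h.trans (hM0 0).symm), fun h => horth (a := 3) (b := 1) (a' := 1) (b' := 3) (by decide) (by rw [HL31, HL13]) (h.trans HM13.symm), fun h => horth (a := 3) (b := 1) (a' := 2) (b' := 2) (by decide) (by rw [HL31, HL22]) (h.trans HM22.symm), fun h => horth (a := 3) (b := 2) (a' := 0) (b' := 1) (by decide) (by rw [HL32, (hL0 1)]) (h.trans (hM0 1).symm), fun h => horth (a := 3) (b := 2) (a' := 1) (b' := 0) (by decide) (by rw [HL32, (hLa0 1)]) (h.trans HM10.symm), fun h => horth (a := 3) (b := 2) (a' := 2) (b' := 3) (by decide) (by rw [HL32, HL23]) (h.trans HM23.symm), fun h => horth (a := 3) (b := 3) (a' := 0) (b' := 2) (by decide) (by rw [HL33, (hL0 2)]) (h.trans (hM0 2).symm), fun h => horth (a := 3) (b := 3) (a' := 1) (b' := 1) (by decide) (by rw [HL33, HL11]) (h.trans HM11.symm), fun h => horth (a := 3) (b := 3) (a' := 2) (b' := 0) (by decide) (by rw [HL33, (hLa0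 2)]) (h.trans HM20.symm)⟩).elim
  ·
    rcases (by decide : ∀ x1 x2 x3 : Fin 4, (x1 ≠ 2 ∧ x2 ≠ 2 ∧ x3 ≠ 2 ∧ x1 ≠ x2 ∧ x1 ≠ x3 ∧ x2 ≠ x3 ∧ x1 ≠ 1 ∧ x1 ≠ 3 ∧ x2 ≠ 2 ∧ x2 ≠ 0 ∧ x3 ≠ 3 ∧ x3 ≠ 2) → ((x1 = 0 ∧ x2 = 3 ∧ x3 = 1))) (L 2 1) (L 2 2) (L 2 3) ⟨fun h => hLrne 2 (by decide) (h.trans (hLa0 2).symm), fun h => hLrne 2 (by decide) (h.trans (hLa0 2).symm), fun h => hLrne 2 (by decide) (h.trans (hLa0 2).symm), hLrne 2 (by decide), hLrne 2 (by decide), hLrne 2 (by decide), fun h => hLcne 1 (by decide) (h.trans (hL0 1).symm), fun h => hLcne 1 (by decide) (h.trans HL11.symm), fun h => hLcne 2 (by decide) (h.trans (hL0 2).symm), fun h => hLcne 2 (by decide) (h.trans HL12.symm), fun h => hLcne 3 (by decide) (h.trans (hL0 3).symm), fun h => hLcne 3 (by decide) (h.trans HL13.symm)⟩ with ⟨HL21,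 HL22, HL23⟩
    ·
      rcases (by decide : ∀ x1 x2 x3 : Fin 4, (x1 ≠ 3 ∧ x2 ≠ 3 ∧ x3 ≠ 3 ∧ x1 ≠ x2 ∧ x1 ≠ x3 ∧ x2 ≠ x3 ∧ x1 ≠ 1 ∧ x1 ≠ 3 ∧ x1 ≠ 0 ∧ x2 ≠ 2 ∧ x2 ≠ 0 ∧ x2 ≠ 3 ∧ x3 ≠ 3 ∧ x3 ≠ 2 ∧ x3 ≠ 1) → ((x1 = 2 ∧ x2 = 1 ∧ x3 = 0))) (L 3 1) (L 3 2) (L 3 3) ⟨fun h => hLrne 3 (by decide) (h.trans (hLa0 3).symm), fun h => hLrne 3 (by decide) (h.trans (hLa0 3).symm), fun h => hLrne 3 (by decide) (h.trans (hLa0 3).symm), hLrne 3 (by decide), hLrne 3 (by decide), hLrne 3 (by decide), fun h => hLcne 1 (by decide) (h.trans (hL0 1).symm), fun h => hLcne 1 (by decide) (h.trans HL11.symm), fun h => hLcne 1 (by decide) (h.trans HL21.symm), fun h => hLcne 2 (by decide) (h.trans (hL0 2).symm), fun h => hLcne 2 (by decide) (h.trans HL12.symm), fun h => hLcne 2 (by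 decide) (h.trans HL22.symm), fun h => hLcne 3 (by decide) (h.trans (hL0 3).symm), fun h => hLcne 3 (by decide) (h.trans HL13.symm), fun h => hLcne 3 (by decide) (h.trans HL23.symm)⟩ with ⟨HL31, HL32, HL33⟩
      ·
        rcases (by decide : ∀ y0 y1 y2 y3 : Fin 4, (y0 ≠ y1 ∧ y0 ≠ y2 ∧ y0 ≠ y3 ∧ y1 ≠ y2 ∧ y1 ≠ y3 ∧ y2 ≠ y3 ∧ y0 ≠ 0 ∧ y1 ≠ 1 ∧ y2 ≠ 2 ∧ y3 ≠ 3 ∧ y0 ≠ 1 ∧ y1 ≠ 3 ∧ y2 ≠ 0 ∧ y3 ≠ 2) → ((y0 = 2 ∧ y1 = 0 ∧ y2 = 3 ∧ y3 = 1) ∨ (y0 = 3 ∧ y1 = 2 ∧ y2 = 1 ∧ y3 = 0))) (M 1 0) (M 1 1) (M 1 2) (M 1 3) ⟨hMrne 1 (by decide), hMrne 1 (by decide), hMrne 1 (by decide), hMrne 1 (by decide), hMrne 1 (by decide), hMrne 1 (by decide), fun h => hMcne 0 (by decide) (h.trans (hM0 0).symm), fun h => hMcne 1 (by decide) (h.trans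 (hM0 1).symm), fun h => hMcne 2 (by decide) (h.trans (hM0 2).symm), fun h => hMcne 3 (by decide) (h.trans (hM0 3).symm), fun h => horth (a := 1) (b := 0) (a' := 0) (b' := 1) (by decide) (by rw [(hLa0 1), (hL0 1)]) (h.trans (hM0 1).symm), fun h => horth (a := 1) (b := 1) (a' := 0) (b' := 3) (by decide) (by rw [HL11, (hL0 3)]) (h.trans (hM0 3).symm), fun h => horth (a := 1) (b := 2) (a' := 0) (b' := 0) (by decide) (by rw [HL12, (hL0 0)]) (h.trans (hM0 0).symm), fun h => horth (a := 1) (b := 3) (a' := 0) (b' := 2) (by decide) (by rw [HL13, (hL0 2)]) (h.trans (hM0 2).symm)⟩ with ⟨HM10, HM11, HM12, HM13⟩ | ⟨HM10, HM11, HM12, HM13⟩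
        ·
          rcases (by decide : ∀ y0 y1 y2 y3 : Fin 4, (y0 ≠ y1 ∧ y0 ≠ y2 ∧ y0 ≠ y3 ∧ y1 ≠ y2 ∧ y1 ≠ y3 ∧ y2 ≠ y3 ∧ y0 ≠ 0 ∧ y0 ≠ 2 ∧ y1 ≠ 1 ∧ y1 ≠ 0 ∧ y2 ≠ 2 ∧ y2 ≠ 3 ∧ y3 ≠ 3 ∧ y3 ≠ 1 ∧ y0 ≠ 2 ∧ y0 ≠ 1 ∧ y1 ≠ 0 ∧ y1 ≠ 3 ∧ y2 ≠ 3 ∧ y2 ≠ 0 ∧ y3 ≠ 1 ∧ y3 ≠ 2) → ((y0 = 3 ∧ y1 = 2 ∧ y2 = 1 ∧ y3 = 0))) (M 2 0) (M 2 1) (M 2 2) (M 2 3) ⟨hMrne 2 (by decide), hMrne 2 (by decide), hMrne 2 (by decide), hMrne 2 (by decide), hMrne 2 (by decide), hMrne 2 (by decide), fun h => hMcne 0 (by decide) (h.trans (hM0 0).symm), fun h => hMcne 0 (by decide) (h.trans HM10.symm), fun h => hMcne 1 (by decide) (h.trans (hM0 1).symm), fun h => hMcne 1 (by decide) (h.trans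 HM11.symm), fun h => hMcne 2 (by decide) (h.trans (hM0 2).symm), fun h => hMcne 2 (by decide) (h.trans HM12.symm), fun h => hMcne 3 (by decide) (h.trans (hM0 3).symm), fun h => hMcne 3 (by decide) (h.trans HM13.symm), fun h => horth (a := 2) (b := 0) (a' := 0) (b' := 2) (by decide) (by rw [(hLa0 2), (hL0 2)]) (h.trans (hM0 2).symm), fun h => horth (a := 2) (b := 0) (a' := 1) (b' := 3) (by decide) (by rw [(hLa0 2), HL13]) (h.trans HM13.symm), fun h => horth (a := 2) (b := 1) (a' := 0) (b' := 0) (by decide) (by rw [HL21, (hL0 0)]) (h.trans (hM0 0).symm), fun h => horth (a := 2) (b := 1) (a' := 1) (b' := 2) (by decide) (by rw [HL21, HL12]) (h.trans HM12.symm), fun h => horth (a := 2) (b := 2) (a' := 0) (b' := 3) (by decide) (by rw [HL22, (hL0 3)]) (h.trans (hM0 3).symm), fun h => horth (a := 2) (b := 2) (a' := 1) (b' := 1) (by decide) (by rw [HL22, HL11]) (h.trans HM11.symm), fun h => horth (a := 2) (b := 3) (a' := 0) (b' := 1) (by decide) (by rw [HL23, (hL0 1)]) (h.trans (hM0 1).symm),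 fun h => horth (a := 2) (b := 3) (a' := 1) (b' := 0) (by decide) (by rw [HL23, (hLa0 1)]) (h.trans HM10.symm)⟩ with ⟨HM20, HM21, HM22, HM23⟩
          ·
            exact ((by decide : ∀ y0 y1 y2 y3 : Fin 4, (y0 ≠ y1 ∧ y0 ≠ y2 ∧ y0 ≠ y3 ∧ y1 ≠ y2 ∧ y1 ≠ y3 ∧ y2 ≠ y3 ∧ y0 ≠ 0 ∧ y0 ≠ 2 ∧ y0 ≠ 3 ∧ y1 ≠ 1 ∧ y1 ≠ 0 ∧ y1 ≠ 2 ∧ y2 ≠ 2 ∧ y2 ≠ 3 ∧ y2 ≠ 1 ∧ y3 ≠ 3 ∧ y3 ≠ 1 ∧ y3 ≠ 0 ∧ y0 ≠ 3 ∧ y0 ≠ 0 ∧ y0 ≠ 1 ∧ y1 ≠ 2 ∧ y1 ≠ 1 ∧ y1 ≠ 3 ∧ y2 ≠ 1 ∧ y2 ≠ 2 ∧ y2 ≠ 0 ∧ y3 ≠ 0 ∧ y3 ≠ 3 ∧ y3 ≠ 2) → (False)) (M 3 0) (M 3 1) (M 3 2) (M 3 3) ⟨hMrne 3 (by decide), hMrne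 3 (by decide), hMrne 3 (by decide), hMrne 3 (by decide), hMrne 3 (by decide), hMrne 3 (by decide), fun h => hMcne 0 (by decide) (h.trans (hM0 0).symm), fun h => hMcne 0 (by decide) (h.trans HM10.symm), fun h => hMcne 0 (by decide) (h.trans HM20.symm), fun h => hMcne 1 (by decide) (h.trans (hM0 1).symm), fun h => hMcne 1 (by decide) (h.trans HM11.symm), fun h => hMcne 1 (by decide) (h.trans HM21.symm), fun h => hMcne 2 (by decide) (h.trans (hM0 2).symm), fun h => hMcne 2 (by decide) (h.trans HM12.symm), fun h => hMcne 2 (by decide) (h.trans HM22.symm), fun h => hMcne 3 (by decide) (h.trans (hM0 3).symm), fun h => hMcne 3 (by decide) (h.trans HM13.symm), fun h => hMcne 3 (by decide) (h.trans HM23.symm), fun h => horth (a := 3) (b := 0) (a' := 0) (b' := 3) (by decide) (by rw [(hLa0 3), (hL0 3)]) (h.trans (hM0 3).symm), fun h => horth (a := 3) (b := 0) (a' := 1) (b' := 1) (by decide) (by rw [(hLa0 3), HL11]) (h.trans HM11.symm), fun h => horth (a := 3) (b := 0) (a' := 2) (b' := 2) (by decide) (by rw [(hLa0 3), HL22]) (h.trans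 HM22.symm), fun h => horth (a := 3) (b := 1) (a' := 0) (b' := 2) (by decide) (by rw [HL31, (hL0 2)]) (h.trans (hM0 2).symm), fun h => horth (a := 3) (b := 1) (a' := 1) (b' := 3) (by decide) (by rw [HL31, HL13]) (h.trans HM13.symm), fun h => horth (a := 3) (b := 1) (a' := 2) (b' := 0) (by decide) (by rw [HL31, (hLa0 2)]) (h.trans HM20.symm), fun h => horth (a := 3) (b := 2) (a' := 0) (b' := 1) (by decide) (by rw [HL32, (hL0 1)]) (h.trans (hM0 1).symm), fun h => horth (a := 3) (b := 2) (a' := 1) (b' := 0) (by decide) (by rw [HL32, (hLa0 1)]) (h.trans HM10.symm), fun h => horth (a := 3) (b := 2) (a' := 2) (b' := 3) (by decide) (by rw [HL32, HL23]) (h.trans HM23.symm), fun h => horth (a := 3) (b := 3) (a' := 0) (b' := 0) (by decide) (by rw [HL33, (hL0 0)]) (h.trans (hM0 0).symm), fun h => horth (a := 3) (b := 3) (a' := 1) (b' := 2) (by decide) (by rw [HL33, HL12]) (h.trans HM12.symm), fun h => horth (a := 3) (b := 3) (a' := 2) (b' := 1) (by decide) (by rw [HL33, HL21]) (h.trans 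HM21.symm)⟩).elim
        ·
          rcases (by decide : ∀ y0 y1 y2 y3 : Fin 4, (y0 ≠ y1 ∧ y0 ≠ y2 ∧ y0 ≠ y3 ∧ y1 ≠ y2 ∧ y1 ≠ y3 ∧ y2 ≠ y3 ∧ y0 ≠ 0 ∧ y0 ≠ 3 ∧ y1 ≠ 1 ∧ y1 ≠ 2 ∧ y2 ≠ 2 ∧ y2 ≠ 1 ∧ y3 ≠ 3 ∧ y3 ≠ 0 ∧ y0 ≠ 2 ∧ y0 ≠ 0 ∧ y1 ≠ 0 ∧ y1 ≠ 1 ∧ y2 ≠ 3 ∧ y2 ≠ 2 ∧ y3 ≠ 1 ∧ y3 ≠ 3) → ((y0 = 1 ∧ y1 = 3 ∧ y2 = 0 ∧ y3 = 2))) (M 2 0) (M 2 1) (M 2 2) (M 2 3) ⟨hMrne 2 (by decide), hMrne 2 (by decide), hMrne 2 (by decide), hMrne 2 (by decide), hMrne 2 (by decide), hMrne 2 (by decide), fun h => hMcne 0 (by decide) (h.trans (hM0 0).symm), fun h => hMcne 0 (by decide) (h.trans HM10.symm), fun h => hMcne 1 (by decide) (h.trans (hM0 1).symm), fun h => hMcne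 1 (by decide) (h.trans HM11.symm), fun h => hMcne 2 (by decide) (h.trans (hM0 2).symm), fun h => hMcne 2 (by decide) (h.trans HM12.symm), fun h => hMcne 3 (by decide) (h.trans (hM0 3).symm), fun h => hMcne 3 (by decide) (h.trans HM13.symm), fun h => horth (a := 2) (b := 0) (a' := 0) (b' := 2) (by decide) (by rw [(hLa0 2), (hL0 2)]) (h.trans (hM0 2).symm), fun h => horth (a := 2) (b := 0) (a' := 1) (b' := 3) (by decide) (by rw [(hLa0 2), HL13]) (h.trans HM13.symm), fun h => horth (a := 2) (b := 1) (a' := 0) (b' := 0) (by decide) (by rw [HL21, (hL0 0)]) (h.trans (hM0 0).symm), fun h => horth (a := 2) (b := 1) (a' := 1) (b' := 2) (by decide) (by rw [HL21, HL12]) (h.trans HM12.symm), fun h => horth (a := 2) (b := 2) (a' := 0) (b' := 3) (by decide) (by rw [HL22, (hL0 3)]) (h.trans (hM0 3).symm), fun h => horth (a := 2) (b := 2) (a' := 1) (b' := 1) (by decide) (by rw [HL22, HL11]) (h.trans HM11.symm), fun h => horth (a := 2) (b := 3) (a' := 0) (b' := 1) (by decide) (by rw [HL23, (hL0 1)]) (h.trans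 (hM0 1).symm), fun h => horth (a := 2) (b := 3) (a' := 1) (b' := 0) (by decide) (by rw [HL23, (hLa0 1)]) (h.trans HM10.symm)⟩ with ⟨HM20, HM21, HM22, HM23⟩
          ·
            exact ((by decide : ∀ y0 y1 y2 y3 : Fin 4, (y0 ≠ y1 ∧ y0 ≠ y2 ∧ y0 ≠ y3 ∧ y1 ≠ y2 ∧ y1 ≠ y3 ∧ y2 ≠ y3 ∧ y0 ≠ 0 ∧ y0 ≠ 3 ∧ y0 ≠ 1 ∧ y1 ≠ 1 ∧ y1 ≠ 2 ∧ y1 ≠ 3 ∧ y2 ≠ 2 ∧ y2 ≠ 1 ∧ y2 ≠ 0 ∧ y3 ≠ 3 ∧ y3 ≠ 0 ∧ y3 ≠ 2 ∧ y0 ≠ 3 ∧ y0 ≠ 2 ∧ y0 ≠ 0 ∧ y1 ≠ 2 ∧ y1 ≠ 0 ∧ y1 ≠ 1 ∧ y2 ≠ 1 ∧ y2 ≠ 3 ∧ y2 ≠ 2 ∧ y3 ≠ 0 ∧ y3 ≠ 1 ∧ y3 ≠ 3) → (False)) (M 3 0) (M 3 1) (M 3 2) (M 3 3) ⟨hMrne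 3 (by decide), hMrne 3 (by decide), hMrne 3 (by decide), hMrne 3 (by decide), hMrne 3 (by decide), hMrne 3 (by decide), fun h => hMcne 0 (by decide) (h.trans (hM0 0).symm), fun h => hMcne 0 (by decide) (h.trans HM10.symm), fun h => hMcne 0 (by decide) (h.trans HM20.symm), fun h => hMcne 1 (by decide) (h.trans (hM0 1).symm), fun h => hMcne 1 (by decide) (h.trans HM11.symm), fun h => hMcne 1 (by decide) (h.trans HM21.symm), fun h => hMcne 2 (by decide) (h.trans (hM0 2).symm), fun h => hMcne 2 (by decide) (h.trans HM12.symm), fun h => hMcne 2 (by decide) (h.trans HM22.symm), fun h => hMcne 3 (by decide) (h.trans (hM0 3).symm), fun h => hMcne 3 (by decide) (h.trans HM13.symm), fun h => hMcne 3 (by decide) (h.trans HM23.symm), fun h => horth (a := 3) (b := 0) (a' := 0) (b' := 3) (by decide) (by rw [(hLa0 3), (hL0 3)]) (h.trans (hM0 3).symm), fun h => horth (a := 3) (b := 0) (a' := 1) (b' := 1) (by decide) (by rw [(hLa0 3), HL11]) (h.trans HM11.symm), fun h => horth (a := 3) (b := 0) (a' := 2) (b' := 2) (by decide) (by rw [(hLa0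 3), HL22]) (h.trans HM22.symm), fun h => horth (a := 3) (b := 1) (a' := 0) (b' := 2) (by decide) (by rw [HL31, (hL0 2)]) (h.trans (hM0 2).symm), fun h => horth (a := 3) (b := 1) (a' := 1) (b' := 3) (by decide) (by rw [HL31, HL13]) (h.trans HM13.symm), fun h => horth (a := 3) (b := 1) (a' := 2) (b' := 0) (by decide) (by rw [HL31, (hLa0 2)]) (h.trans HM20.symm), fun h => horth (a := 3) (b := 2) (a' := 0) (b' := 1) (by decide) (by rw [HL32, (hL0 1)]) (h.trans (hM0 1).symm), fun h => horth (a := 3) (b := 2) (a' := 1) (b' := 0) (by decide) (by rw [HL32, (hLa0 1)]) (h.trans HM10.symm), fun h => horth (a := 3) (b := 2) (a' := 2) (b' := 3) (by decide) (by rw [HL32, HL23]) (h.trans HM23.symm), fun h => horth (a := 3) (b := 3) (a' := 0) (b' := 0) (by decide) (by rw [HL33, (hL0 0)]) (h.trans (hM0 0).symm), fun h => horth (a := 3) (b := 3) (a' := 1) (b' := 2) (by decide) (by rw [HL33, HL12]) (h.trans HM12.symm), fun h => horth (a := 3) (b := 3) (a' := 2) (b' := 1) (by decide) (by rw [HL33,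 HL21]) (h.trans HM21.symm)⟩).elim


end NoNet44X


/-- An `(n,k)`-net in `ℂℙ²`. Points of `ℂℙ²` are the 1-dimensional `ℂ`-linear
subspaces of `ℂ³` and lines are the 2-dimensional subspaces; a point `p` lies
on a line `ℓ` iff `p ≤ ℓ`. `A` assigns to each `i : Fin n` a finite set of `k`
lines, the classes `A i` are pairwise disjoint, `χ` is a finite set of points,
lines from different classes are distinct and meet in a point of `χ`, and
through every point of `χ` there passes exactly one line of each class. -/
structure IsNet (n k : ℕ) (A : Fin n → Finset (Submodule ℂ (Fin 3 → ℂ)))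
    (χ : Finset (Submodule ℂ (Fin 3 → ℂ))) : Prop where
  three_le : 3 ≤ n
  line_dim : ∀ i, ∀ ℓ ∈ A i, Module.finrank ℂ ℓ = 2
  point_dim : ∀ p ∈ χ, Module.finrank ℂ p = 1
  card_eq : ∀ i, (A i).card = k
  classes_disjoint : ∀ i j, i ≠ j → Disjoint (A i) (A j)
  inter_mem : ∀ i j, i ≠ j → ∀ ℓ₁ ∈ A i, ∀ ℓ₂ ∈ A j, ℓ₁ ≠ ℓ₂ ∧ ℓ₁ ⊓ ℓ₂ ∈ χ
  unique_line : ∀ X ∈ χ, ∀ i, ∃! ℓ, ℓ ∈ A i ∧ X ≤ ℓ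

/-- There does not exist a `(4,4)`-net in `ℂℙ²`. -/
theorem no_net_4_4 :
    ¬ ∃ (A : Fin 4 → Finset (Submodule ℂ (Fin 3 → ℂ)))
        (χ : Finset (Submodule ℂ (Fin 3 → ℂ))), IsNet 4 4 A χ := by
  classical
  rintro ⟨A, χ, net⟩
  open NoNet44X in
  -- basic helpers
  have rk1 : ∀ {P : Submodule ℂ V3}, P ∈ χ → finrank ℂ P = 1 := fun h => net.point_dim _ h
  have rkl : ∀ {i : Fin 4} {ℓ : Submodule ℂ V3}, ℓ ∈ A i → finrank ℂ ℓ = 2 :=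
    fun {i ℓ} h => net.line_dim i ℓ h
  have hpt : ∀ {i j : Fin 4} {ℓ₁ ℓ₂ : Submodule ℂ V3}, i ≠ j → ℓ₁ ∈ A i → ℓ₂ ∈ A j →
      (ℓ₁ ⊓ ℓ₂) ∈ χ := fun {i j ℓ₁ ℓ₂} hij h1 h2 => (net.inter_mem i j hij ℓ₁ h1 ℓ₂ h2).2
  have pt_eq : ∀ {P Q : Submodule ℂ V3}, P ∈ χ → Q ∈ χ → P ≤ Q → P = Q :=
    fun hP hQ h => eq_of_le_of_finrank_le h (by rw [rk1 hP, rk1 hQ])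
  -- two distinct points cannot lie on two lines of different classes
  have key : ∀ {P Q ℓ₁ ℓ₂ : Submodule ℂ V3} {i j : Fin 4}, i ≠ j → ℓ₁ ∈ A i → ℓ₂ ∈ A j →
      P ∈ χ → Q ∈ χ → P ≤ ℓ₁ → Q ≤ ℓ₁ → P ≤ ℓ₂ → Q ≤ ℓ₂ → P = Q := by
    intro P Q ℓ₁ ℓ₂ i j hij h1 h2 hP hQ hPl1 hQl1 hPl2 hQl2
    by_contra hne
    exact (net.inter_mem i j hij ℓ₁ h1 ℓ₂ h2).1
      ((line_eq_sup (rk1 hP) (rk1 hQ) hne (rkl h1) hPl1 hQl1).trans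
        (line_eq_sup (rk1 hP) (rk1 hQ) hne (rkl h2) hPl2 hQl2).symm)
  -- the unique line of class i through a point of χ
  have hul0 : ∀ P (_ : P ∈ χ) (i : Fin 4), ∃ ℓ, (ℓ ∈ A i ∧ P ≤ ℓ) ∧
      ∀ ℓ', ℓ' ∈ A i ∧ P ≤ ℓ' → ℓ' = ℓ := fun P hP i => net.unique_line P hP i
  choose ul hulmem huluniq using hul0
  have ulmem : ∀ P (hP : P ∈ χ) i, ul P hP i ∈ A i := fun P hP i => (hulmem P hP i).1
  have ulle : ∀ P (hP : P ∈ χ) i, P ≤ ul P hP i := fun P hP i => (hulmem P hP i).2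
  have class_unique : ∀ {P : Submodule ℂ V3} (hP : P ∈ χ) {i : Fin 4}
      {ℓ ℓ' : Submodule ℂ V3}, ℓ ∈ A i → ℓ' ∈ A i → P ≤ ℓ → P ≤ ℓ' → ℓ = ℓ' :=
    fun {P} hP {i ℓ ℓ'} h1 h2 hl1 hl2 =>
      (huluniq P hP i ℓ ⟨h1, hl1⟩).trans (huluniq P hP i ℓ' ⟨h2, hl2⟩).symm
  -- enumeration of class 2
  have hcard2 : Fintype.card ↥(A 2) = 4 := by rw [Fintype.card_coe, net.card_eq 2]
  let E2 : ↥(A 2) ≃ Fin 4 := (A 2).equivFin.trans (finCongr (by rw [net.card_eq 2]))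
  let g2 : Fin 4 → Submodule ℂ V3 := fun c => (E2.symm c : ↥(A 2)).1
  have g2mem : ∀ c, g2 c ∈ A 2 := fun c => (E2.symm c).2
  have g2inj : Function.Injective g2 := fun c c' h =>
    (Equiv.injective E2.symm) (Subtype.ext h)
  have g2ind : ∀ (ℓ : Submodule ℂ V3) (h : ℓ ∈ A 2), g2 (E2 ⟨ℓ, h⟩) = ℓ := by
    intro ℓ h
    show ((E2.symm (E2 ⟨ℓ, h⟩)) : ↥(A 2)).1 = ℓ
    rw [Equiv.symm_apply_apply]
  -- a line of class 1
  obtain ⟨n1, hn1⟩ : ∃ ℓ, ℓ ∈ A 1 := by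
    have : (A 1).Nonempty := Finset.card_pos.mp (by rw [net.card_eq 1]; norm_num)
    exact ⟨this.choose, this.choose_spec⟩
  -- labelled lines of class 0
  have hP2χ : ∀ a : Fin 4, (n1 ⊓ g2 a) ∈ χ := fun a => hpt (by decide) hn1 (g2mem a)
  let g0 : Fin 4 → Submodule ℂ V3 := fun a => ul (n1 ⊓ g2 a) (hP2χ a) 0
  have g0mem : ∀ a, g0 a ∈ A 0 := fun a => ulmem _ _ 0
  have g0le : ∀ a, n1 ⊓ g2 a ≤ g0 a := fun a => ulle _ _ 0
  have g0inj : Function.Injective g0 := by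
    intro a a' h
    have hP : (n1 ⊓ g2 a) = (n1 ⊓ g2 a') := by
      refine key (show (0:Fin 4) ≠ 1 by decide) (g0mem a) hn1 (hP2χ a) (hP2χ a')
        (g0le a) ?_ inf_le_left inf_le_left
      rw [h]; exact g0le a'
    exact g2inj (class_unique (hP2χ a) (g2mem a) (g2mem a') inf_le_right
      (hP ▸ inf_le_right))
  -- labelled lines of class 1
  have hQχ : ∀ b : Fin 4, (g0 0 ⊓ g2 b) ∈ χ := fun b => hpt (by decide) (g0mem 0) (g2mem b)
  let g1 : Fin 4 → Submodule ℂ V3 := fun b => ul (g0 0 ⊓ g2 b) (hQχ b) 1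
  have g1mem : ∀ b, g1 b ∈ A 1 := fun b => ulmem _ _ 1
  have g1le : ∀ b, g0 0 ⊓ g2 b ≤ g1 b := fun b => ulle _ _ 1
  have g1inj : Function.Injective g1 := by
    intro b b' h
    have hP : (g0 0 ⊓ g2 b) = (g0 0 ⊓ g2 b') := by
      refine key (show (1:Fin 4) ≠ 0 by decide) (g1mem b) (g0mem 0) (hQχ b) (hQχ b')
        (g1le b) ?_ inf_le_left inf_le_left
      rw [h]; exact g1le b'
    exact g2inj (class_unique (hQχ b) (g2mem b) (g2mem b') inf_le_right
      (hP ▸ inf_le_right))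
  -- the points
  have hXχ : ∀ a b : Fin 4, (g0 a ⊓ g1 b) ∈ χ := fun a b =>
    hpt (by decide) (g0mem a) (g1mem b)
  set X : Fin 4 → Fin 4 → Submodule ℂ V3 := fun a b => g0 a ⊓ g1 b with hXdef
  have hXmem : ∀ a b, X a b ∈ χ := hXχ
  have hX0 : ∀ a b, X a b ≤ g0 a := fun a b => inf_le_left
  have hX1 : ∀ a b, X a b ≤ g1 b := fun a b => inf_le_right
  have hXinj : ∀ a b a' b' : Fin 4, X a b = X a' b' → a = a' ∧ b = b' := by
    intro a b a' b' h
    constructor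
    · exact g0inj (class_unique (hXmem a b) (g0mem a) (g0mem a') (hX0 a b)
        (h ▸ hX0 a' b'))
    · exact g1inj (class_unique (hXmem a b) (g1mem b) (g1mem b') (hX1 a b)
        (h ▸ hX1 a' b'))
  -- labelled lines of class 3
  let g3 : Fin 4 → Submodule ℂ V3 := fun b => ul (X 0 b) (hXmem 0 b) 3
  have g3mem : ∀ b, g3 b ∈ A 3 := fun b => ulmem _ _ 3
  have g3le : ∀ b, X 0 b ≤ g3 b := fun b => ulle _ _ 3
  have g3inj : Function.Injective g3 := by
    intro b b' h
    have hP : X 0 b = X 0 b' :=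
      key (show (3:Fin 4) ≠ 0 by decide) (g3mem b) (g0mem 0) (hXmem 0 b) (hXmem 0 b')
        (g3le b) (h ▸ g3le b') (hX0 0 b) (hX0 0 b')
    exact g1inj (class_unique (hXmem 0 b) (g1mem b) (g1mem b') (hX1 0 b)
      (hP ▸ hX1 0 b'))
  have hbij3 : Function.Bijective (fun b : Fin 4 => (⟨g3 b, g3mem b⟩ : ↥(A 3))) := by
    rw [Fintype.bijective_iff_injective_and_card]
    exact ⟨fun b b' h => g3inj (congrArg Subtype.val h),
      by rw [Fintype.card_coe, net.card_eq 3, Fintype.card_fin]⟩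
  let E3 : Fin 4 ≃ ↥(A 3) := Equiv.ofBijective _ hbij3
  have hE3 : ∀ b, E3 b = (⟨g3 b, g3mem b⟩ : ↥(A 3)) := fun b => rfl
  -- the latin squares
  let Lf : Fin 4 → Fin 4 → Fin 4 := fun a b =>
    E2 ⟨ul (X a b) (hXmem a b) 2, ulmem _ _ 2⟩
  let Mf : Fin 4 → Fin 4 → Fin 4 := fun a b =>
    E3.symm ⟨ul (X a b) (hXmem a b) 3, ulmem _ _ 3⟩
  have hLg : ∀ a b, g2 (Lf a b) = ul (X a b) (hXmem a b) 2 := fun a b => g2ind _ _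
  have hXleL : ∀ a b, X a b ≤ g2 (Lf a b) := fun a b => (hLg a b).symm ▸ ulle _ _ 2
  have hMg : ∀ a b, g3 (Mf a b) = ul (X a b) (hXmem a b) 3 := by
    intro a b
    have h := E3.apply_symm_apply ⟨ul (X a b) (hXmem a b) 3, ulmem _ _ 3⟩
    rw [hE3] at h
    exact congrArg Subtype.val h
  have hXleM : ∀ a b, X a b ≤ g3 (Mf a b) := fun a b => (hMg a b).symm ▸ ulle _ _ 3
  -- from equal labels to equal lines
  have hLlines : ∀ {a b a' b' : Fin 4}, Lf a b = Lf a' b' →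
      ul (X a b) (hXmem a b) 2 = ul (X a' b') (hXmem a' b') 2 := by
    intro a b a' b' h
    have := E2.injective h
    exact congrArg Subtype.val this
  have hMlines : ∀ {a b a' b' : Fin 4}, Mf a b = Mf a' b' →
      ul (X a b) (hXmem a b) 3 = ul (X a' b') (hXmem a' b') 3 := by
    intro a b a' b' h
    have := E3.symm.injective h
    exact congrArg Subtype.val this
  -- latin and orthogonality properties
  have hLr : ∀ a : Fin 4, ∀ {b b' : Fin 4}, Lf a b = Lf a b' → b = b' := by
    intro a b b' h
    have hl := hLlines h
    have hP : X a b = X a b' :=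
      key (show (2:Fin 4) ≠ 0 by decide) (ulmem (X a b) (hXmem a b) 2) (g0mem a)
        (hXmem a b) (hXmem a b') (ulle _ _ 2) (hl ▸ ulle _ _ 2) (hX0 a b) (hX0 a b')
    exact g1inj (class_unique (hXmem a b) (g1mem b) (g1mem b') (hX1 a b)
      (hP ▸ hX1 a b'))
  have hLc : ∀ b : Fin 4, ∀ {a a' : Fin 4}, Lf a b = Lf a' b → a = a' := by
    intro b a a' h
    have hl := hLlines h
    have hP : X a b = X a' b :=
      key (show (2:Fin 4) ≠ 1 by decide) (ulmem (X a b) (hXmem a b) 2) (g1mem b)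
        (hXmem a b) (hXmem a' b) (ulle _ _ 2) (hl ▸ ulle _ _ 2) (hX1 a b) (hX1 a' b)
    exact g0inj (class_unique (hXmem a b) (g0mem a) (g0mem a') (hX0 a b)
      (hP ▸ hX0 a' b))
  have hMr : ∀ a : Fin 4, ∀ {b b' : Fin 4}, Mf a b = Mf a b' → b = b' := by
    intro a b b' h
    have hl := hMlines h
    have hP : X a b = X a b' :=
      key (show (3:Fin 4) ≠ 0 by decide) (ulmem (X a b) (hXmem a b) 3) (g0mem a)
        (hXmem a b) (hXmem a b') (ulle _ _ 3) (hl ▸ ulle _ _ 3) (hX0 a b) (hX0 a b')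
    exact g1inj (class_unique (hXmem a b) (g1mem b) (g1mem b') (hX1 a b)
      (hP ▸ hX1 a b'))
  have hMc : ∀ b : Fin 4, ∀ {a a' : Fin 4}, Mf a b = Mf a' b → a = a' := by
    intro b a a' h
    have hl := hMlines h
    have hP : X a b = X a' b :=
      key (show (3:Fin 4) ≠ 1 by decide) (ulmem (X a b) (hXmem a b) 3) (g1mem b)
        (hXmem a b) (hXmem a' b) (ulle _ _ 3) (hl ▸ ulle _ _ 3) (hX1 a b) (hX1 a' b)
    exact g0inj (class_unique (hXmem a b) (g0mem a) (g0mem a') (hX0 a b)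
      (hP ▸ hX0 a' b))
  have hOr : ∀ a b a' b' : Fin 4, Lf a b = Lf a' b' → Mf a b = Mf a' b' →
      a = a' ∧ b = b' := by
    intro a b a' b' hL hM
    have hl := hLlines hL
    have hm := hMlines hM
    have hP : X a b = X a' b' :=
      key (show (2:Fin 4) ≠ 3 by decide) (ulmem (X a b) (hXmem a b) 2)
        (ulmem (X a b) (hXmem a b) 3) (hXmem a b) (hXmem a' b')
        (ulle _ _ 2) (hl ▸ ulle _ _ 2) (ulle _ _ 3) (hm ▸ ulle _ _ 3)
    exact hXinj a b a' b' hP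
  -- normalization facts
  have hg10 : g1 0 = n1 := by
    have hPQ : (n1 ⊓ g2 0) = (g0 0 ⊓ g2 0) :=
      pt_eq (hP2χ 0) (hQχ 0) (le_inf (le_trans (le_inf inf_le_left inf_le_right)
        (g0le 0)) inf_le_right)
    exact (huluniq _ (hQχ 0) 1 n1 ⟨hn1, hPQ ▸ inf_le_left⟩).symm
  have hLa0 : ∀ a, Lf a 0 = a := by
    intro a
    have hPX : (n1 ⊓ g2 a) = X a 0 :=
      pt_eq (hP2χ a) (hXmem a 0) (le_inf (g0le a) (by rw [hg10]; exact inf_le_left))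
    have hXg2 : X a 0 ≤ g2 a := hPX ▸ inf_le_right
    have hueq : ul (X a 0) (hXmem a 0) 2 = g2 a :=
      class_unique (hXmem a 0) (ulmem _ _ 2) (g2mem a) (ulle _ _ 2) hXg2
    show E2 ⟨ul (X a 0) (hXmem a 0) 2, ulmem _ _ 2⟩ = a
    rw [show (⟨ul (X a 0) (hXmem a 0) 2, ulmem _ _ 2⟩ : ↥(A 2)) = E2.symm a from
      Subtype.ext hueq]
    exact E2.apply_symm_apply a
  have hL0b : ∀ b, Lf 0 b = b := by
    intro b
    have hPX : (g0 0 ⊓ g2 b) = X 0 b :=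
      pt_eq (hQχ b) (hXmem 0 b) (le_inf inf_le_left (g1le b))
    have hXg2 : X 0 b ≤ g2 b := hPX ▸ inf_le_right
    have hueq : ul (X 0 b) (hXmem 0 b) 2 = g2 b :=
      class_unique (hXmem 0 b) (ulmem _ _ 2) (g2mem b) (ulle _ _ 2) hXg2
    show E2 ⟨ul (X 0 b) (hXmem 0 b) 2, ulmem _ _ 2⟩ = b
    rw [show (⟨ul (X 0 b) (hXmem 0 b) 2, ulmem _ _ 2⟩ : ↥(A 2)) = E2.symm b from
      Subtype.ext hueq]
    exact E2.apply_symm_apply b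
  have hM0b : ∀ b, Mf 0 b = b := by
    intro b
    show E3.symm ⟨ul (X 0 b) (hXmem 0 b) 3, ulmem _ _ 3⟩ = b
    rw [show (⟨ul (X 0 b) (hXmem 0 b) 3, ulmem _ _ 3⟩ : ↥(A 3)) = E3 b from
      Subtype.ext rfl]
    exact E3.symm_apply_apply b
  -- classify the pair of orthogonal latin squares
  obtain ⟨hLx, hMx⟩ := NoNet44X.mols_classify Lf Mf hLr hLc hMr hMc hL0b hLa0 hM0b hOr
  -- assemble the line function
  set mfun : Fin 4 → Fin 4 → Submodule ℂ V3 := ![g0, g1, g2, g3] with hmfun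
  have hmemA : ∀ i c, mfun i c ∈ A i := by
    intro i c
    fin_cases i
    · exact g0mem c
    · exact g1mem c
    · exact g2mem c
    · exact g3mem c
  have hm2' : ∀ i c, finrank ℂ (mfun i c) = 2 := fun i c => rkl (hmemA i c)
  have hmne' : ∀ i j c d, i ≠ j → mfun i c ≠ mfun j d := fun i j c d hij =>
    (net.inter_mem i j hij _ (hmemA i c) _ (hmemA j d)).1
  have hXr1 : ∀ a b, finrank ℂ (X a b) = 1 := fun a b => rk1 (hXmem a b)
  have hXleg2 : ∀ a b, X a b ≤ g2 (NoNet44X.xor4 a b) := fun a b =>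
    (hLx a b) ▸ hXleL a b
  rcases hMx with hM | hM
  · -- standard form
    have hXleg3 : ∀ a b, X a b ≤ g3 (NoNet44X.xor4 (NoNet44X.mw a) b) := fun a b =>
      (hM a b) ▸ hXleM a b
    exact NoNet44X.geom_core X mfun hXr1 hm2' hmne' hXinj
      (fun a b => hX0 a b) (fun a b => hX1 a b) (fun a b => hXleg2 a b)
      (fun a b => hXleg3 a b)
  · -- Frobenius-twisted form
    have hXleg3 : ∀ a b, X a b ≤ g3 (NoNet44X.xor4 (NoNet44X.mw2 a) b) := fun a b =>
      (hM a b) ▸ hXleM a b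
    have hφinj : ∀ {x y : Fin 4}, (![0, 1, 3, 2] : Fin 4 → Fin 4) x =
        ![0, 1, 3, 2] y → x = y := by decide
    have hxid : ∀ a b : Fin 4, NoNet44X.xor4 (![0, 1, 3, 2] a) (![0, 1, 3, 2] b) =
        ![0, 1, 3, 2] (NoNet44X.xor4 a b) := by decide
    have hxid3 : ∀ a b : Fin 4, NoNet44X.xor4 (NoNet44X.mw2 (![0, 1, 3, 2] a))
        (![0, 1, 3, 2] b) = ![0, 1, 3, 2] (NoNet44X.xor4 (NoNet44X.mw a) b) := by decide
    refine NoNet44X.geom_core (fun a b => X (![0, 1, 3, 2] a) (![0, 1, 3, 2] b))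
      (fun i c => mfun i (![0, 1, 3, 2] c))
      (fun a b => hXr1 _ _) (fun i c => hm2' i _) (fun i j c d hij => hmne' i j _ _ hij)
      ?_ (fun a b => hX0 _ _) (fun a b => hX1 _ _) ?_ ?_
    · intro a b a' b' h
      obtain ⟨h1, h2⟩ := hXinj _ _ _ _ h
      exact ⟨hφinj h1, hφinj h2⟩
    · intro a b
      have h := hXleg2 (![0, 1, 3, 2] a) (![0, 1, 3, 2] b)
      rwa [hxid a b] at h
    · intro a b
      have h := hXleg3 (![0, 1, 3, 2] a) (![0, 1, 3, 2] b)
      rwa [hxid3 a b] at h
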